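/- arXiv:1803.06496 — 8 statements merged into one kernel-verified Lean document; each statement's English description precedes it below -/
import Mathlib

section
/- The maximum cut value of a weighted graph equals half the supremum of F(x) = I(x)/‖x‖_∞ over all nonzero x ∈ ℝ^n, i.e., max_{S⊆V} cut(S) = (1/2) max_{x ∈ ℝ^n \setminus \{0\}} F(x). -/
/-! Since `|·|` is convex and the weights are nonnegative, `I` is convex, so on the cube
`[-1, 1]ⁿ = convexHull {±1}ⁿ` it is maximised at a sign vector `σ_S`, where `I(σ_S) = 2 cut(S)`.
By homogeneity `F(x) = I(x / ‖x‖_∞)`, and sign vectors have `‖σ_S‖_∞ = 1`, so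
`max F = 2 max cut`. -/

open Finset

noncomputable def cutVal {n : ℕ} (w : Fin n → Fin n → ℝ) (S : Finset (Fin n)) : ℝ :=
  ∑ i ∈ S, ∑ j ∈ Sᶜ, w i j

noncomputable def Ifun {n : ℕ} (w : Fin n → Fin n → ℝ) (x : Fin n → ℝ) : ℝ :=
  (1 / 2) * ∑ i, ∑ j, w i j * |x i - x j|

def signVector {ι : Type*} [DecidableEq ι] (S : Finset ι) : ι → ℝ :=
  fun i => if i ∈ S then 1 else -1

theorem exists_eq_signVector {ι : Type*} [Fintype ι] [DecidableEq ι] {y : ι → ℝ}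
    (hy : y ∈ Set.univ.pi fun _ => ({-1, 1} : Set ℝ)) : ∃ S : Finset ι, y = signVector S := by
  refine ⟨univ.filter (y · = 1), funext fun i => ?_⟩
  obtain h | h : y i = -1 ∨ y i = 1 := hy i trivial <;> simp [signVector, h]

theorem norm_signVector {ι : Type*} [Fintype ι] [DecidableEq ι] [Nonempty ι] (S : Finset ι) :
    ‖signVector S‖ = 1 := by
  have h (i : ι) : ‖signVector S i‖ = 1 := by by_cases hi : i ∈ S <;> simp [signVector, hi]
  exact le_antisymm ((pi_norm_le_iff_of_nonneg zero_le_one).mpr fun i => (h i).le)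
    ((h (Classical.arbitrary ι)).symm.trans_le (norm_le_pi_norm _ _))

theorem cutVal_eq_sum_ite {n : ℕ} (w : Fin n → Fin n → ℝ) (S : Finset (Fin n)) :
    cutVal w S = ∑ i, ∑ j, if i ∈ S ∧ j ∉ S then w i j else 0 := by
  rw [cutVal, ← Finset.sum_product', ← Finset.sum_product', ← Finset.sum_filter]
  congr 1
  ext ⟨i, j⟩
  simp

theorem Ifun_signVector {n : ℕ} {w : Fin n → Fin n → ℝ} (hsym : ∀ i j, w i j = w j i)
    (S : Finset (Fin n)) : Ifun w (signVector S) = 2 * cutVal w S := by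
  set c : Fin n → Fin n → ℝ := fun i j => if i ∈ S ∧ j ∉ S then w i j else 0
  have hterm (i j : Fin n) :
      w i j * |signVector S i - signVector S j| = 2 * (c i j + c j i) := by
    by_cases hi : i ∈ S <;> by_cases hj : j ∈ S <;>
      norm_num [c, signVector, hi, hj, hsym i j, mul_comm]
  have hcut : cutVal w S = ∑ i, ∑ j, c i j := cutVal_eq_sum_ite w S
  simp only [Ifun, hterm, ← Finset.mul_sum, Finset.sum_add_distrib]
  rw [Finset.sum_comm (f := fun i j => c j i), ← hcut]
  ring

theorem Ifun_smul {n : ℕ} (w : Fin n → Fin n → ℝ) {c : ℝ} (hc : 0 ≤ c) (x : Fin n → ℝ) :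
    Ifun w (c • x) = c * Ifun w x := by
  simp only [Ifun, Pi.smul_apply, smul_eq_mul, ← mul_sub, abs_mul, abs_of_nonneg hc,
    Finset.mul_sum]
  exact Finset.sum_congr rfl fun i _ => Finset.sum_congr rfl fun j _ => by ring

theorem convexOn_Ifun {n : ℕ} {w : Fin n → Fin n → ℝ} (hnn : ∀ i j, 0 ≤ w i j) :
    ConvexOn ℝ Set.univ (Ifun w) := by
  refine ⟨convex_univ, fun x _ y _ a b ha hb _ => ?_⟩
  have hterm (i j : Fin n) :
      |(a • x + b • y) i - (a • x + b • y) j| ≤ a * |x i - x j| + b * |y i - y j| :=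
    calc _ = |a * (x i - x j) + b * (y i - y j)| := by
          simp only [Pi.add_apply, Pi.smul_apply, smul_eq_mul]; ring_nf
      _ ≤ |a * (x i - x j)| + |b * (y i - y j)| := abs_add_le _ _
      _ = _ := by rw [abs_mul, abs_mul, abs_of_nonneg ha, abs_of_nonneg hb]
  have hsum : ∑ i, ∑ j, w i j * |(a • x + b • y) i - (a • x + b • y) j| ≤
      a * ∑ i, ∑ j, w i j * |x i - x j| + b * ∑ i, ∑ j, w i j * |y i - y j| := by
    simp only [Finset.mul_sum, ← Finset.sum_add_distrib]
    refine Finset.sum_le_sum fun i _ => Finset.sum_le_sum fun j _ => ?_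
    linarith [mul_le_mul_of_nonneg_left (hterm i j) (hnn i j)]
  simp only [Ifun, smul_eq_mul]
  linarith

theorem exists_Ifun_le_two_mul_cutVal {n : ℕ} {w : Fin n → Fin n → ℝ}
    (hsym : ∀ i j, w i j = w j i) (hnn : ∀ i j, 0 ≤ w i j) {x : Fin n → ℝ} (hx : ‖x‖ ≤ 1) :
    ∃ S : Finset (Fin n), Ifun w x ≤ 2 * cutVal w S := by
  have hcube : x ∈ convexHull ℝ (Set.univ.pi fun _ => ({-1, 1} : Set ℝ)) := by
    simp only [convexHull_pi, convexHull_pair, segment_eq_Icc (by norm_num : (-1 : ℝ) ≤ 1)]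
    exact fun i _ => abs_le.mp <|
      (Real.norm_eq_abs _).symm.trans_le ((norm_le_pi_norm x i).trans hx)
  obtain ⟨y, hy, hxy⟩ :=
    (convexOn_Ifun hnn).exists_ge_of_mem_convexHull (Set.subset_univ _) hcube
  obtain ⟨S, rfl⟩ := exists_eq_signVector hy
  exact ⟨S, hxy.trans_eq (Ifun_signVector hsym S)⟩

theorem exists_Ifun_div_norm_le_two_mul_cutVal {n : ℕ} {w : Fin n → Fin n → ℝ}
    (hsym : ∀ i j, w i j = w j i) (hnn : ∀ i j, 0 ≤ w i j) {x : Fin n → ℝ} (hx : x ≠ 0) :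
    ∃ S : Finset (Fin n), Ifun w x / ‖x‖ ≤ 2 * cutVal w S := by
  rw [div_eq_inv_mul, ← Ifun_smul w (inv_nonneg.mpr (norm_nonneg x))]
  exact exists_Ifun_le_two_mul_cutVal hsym hnn (norm_smul_inv_norm hx).le

/-- The maximum cut value equals half the maximum of `F(x) = I(x)/‖x‖_∞` over nonzero `x`. -/
theorem stmt1 {n : ℕ} (hn : 0 < n) (w : Fin n → Fin n → ℝ)
    (hsym : ∀ i j, w i j = w j i) (hnn : ∀ i j, 0 ≤ w i j) :
    sSup {c : ℝ | ∃ S : Finset (Fin n), c = cutVal w S} =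
      (1 / 2) * sSup {c : ℝ | ∃ x : Fin n → ℝ, x ≠ 0 ∧ c = Ifun w x / ‖x‖} := by
  have : Nonempty (Fin n) := ⟨⟨0, hn⟩⟩
  obtain ⟨S₀, hS₀⟩ := Finite.exists_max (cutVal w)
  have hcut : IsGreatest {c : ℝ | ∃ S : Finset (Fin n), c = cutVal w S} (cutVal w S₀) :=
    ⟨⟨S₀, rfl⟩, by rintro _ ⟨S, rfl⟩; exact hS₀ S⟩
  have hF : IsGreatest {c : ℝ | ∃ x : Fin n → ℝ, x ≠ 0 ∧ c = Ifun w x / ‖x‖}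
      (2 * cutVal w S₀) := by
    refine ⟨⟨signVector S₀, ?_, ?_⟩, ?_⟩
    · exact norm_ne_zero_iff.mp (by simp [norm_signVector])
    · rw [norm_signVector, div_one, Ifun_signVector hsym]
    · rintro _ ⟨x, hx, rfl⟩
      obtain ⟨S, hS⟩ := exists_Ifun_div_norm_le_two_mul_cutVal hsym hnn hx
      exact hS.trans (by linarith [hS₀ S])
  rw [hcut.csSup_eq, hF.csSup_eq]
  ring
end

section
/- If x* is a maximizer of F(x) = I(x)/‖x‖_∞ over ℝ^n \setminus \{0\}, then any subset S with S^+(x*) ⊆ S ⊆ V \setminus S^-(x*) satisfies cut(S) = max_{S'⊆V} cut(S'), i.e., S realizes a maximum cut. -/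
/-!
Since the weights are nonnegative, `I` is subadditive and positively homogeneous. Evaluating
`F` at the `±1` indicator vector of any `S'` gives `F(x*) ≥ 2 cut(S')`. Conversely, the vector
`z = ‖x*‖ • (±1 indicator of S)` agrees with `x*` at every coordinate where `|x*ᵢ| = ‖x*‖`,
so for small `ε > 0` the vector `y = (1 + ε) x* - ε z` still has `‖y‖ ≤ ‖x*‖`, whence
`I(y) ≤ I(x*)` by maximality. Writing `(1 + ε) x* = y + ε z` then gives
`(1 + ε) I(x*) ≤ I(x*) + ε I(z)`, i.e. `I(x*) ≤ I(z) = 2 ‖x*‖ cut(S)`.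
-/

open Finset

open Filter Topology

namespace Ifun

variable {n : ℕ} (w : Fin n → Fin n → ℝ)

lemma nonneg (hnn : ∀ i j, 0 ≤ w i j) (x : Fin n → ℝ) : 0 ≤ Ifun w x := by
  unfold Ifun
  exact mul_nonneg (by norm_num)
    (sum_nonneg fun i _ => sum_nonneg fun j _ => mul_nonneg (hnn i j) (abs_nonneg _))

lemma add_le (hnn : ∀ i j, 0 ≤ w i j) (x y : Fin n → ℝ) :
    Ifun w (x + y) ≤ Ifun w x + Ifun w y := by
  simp only [Ifun, ← mul_add, ← sum_add_distrib]
  gcongr with i _ j _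
  · exact hnn i j
  · rw [Pi.add_apply, Pi.add_apply, add_sub_add_comm]
    exact abs_add_le ..

lemma smul (x : Fin n → ℝ) {c : ℝ} (hc : 0 ≤ c) : Ifun w (c • x) = c * Ifun w x := by
  simp only [Ifun, mul_sum, Pi.smul_apply, smul_eq_mul, ← mul_sub, abs_mul, abs_of_nonneg hc]
  exact sum_congr rfl fun i _ => sum_congr rfl fun j _ => by ring

end Ifun

section

variable {n : ℕ}

def cutVector (S : Finset (Fin n)) : Fin n → ℝ := fun i => if i ∈ S then 1 else -1

lemma norm_cutVector [Nonempty (Fin n)] (S : Finset (Fin n)) : ‖cutVector S‖ = 1 := by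
  have h : ∀ i, ‖cutVector S i‖ = 1 := fun i => by unfold cutVector; split_ifs <;> simp
  obtain ⟨i⟩ := (inferInstance : Nonempty (Fin n))
  refine le_antisymm ((pi_norm_le_iff_of_nonneg zero_le_one).2 fun j => (h j).le) ?_
  exact (h i).symm.le.trans (norm_le_pi_norm _ i)

lemma cutVal_eq_sum_mul_ite (w : Fin n → Fin n → ℝ) (S : Finset (Fin n)) :
    cutVal w S = ∑ i, ∑ j, w i j * if i ∈ S ∧ j ∉ S then 1 else 0 := by
  simp_rw [mul_ite, mul_one, mul_zero, ite_and, ← ite_sum_zero, ← sum_filter]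
  simp [cutVal, compl_eq_univ_sdiff, filter_notMem_eq_sdiff]

lemma Ifun_cutVector (w : Fin n → Fin n → ℝ) (hsym : ∀ i j, w i j = w j i)
    (S : Finset (Fin n)) :
    Ifun w (cutVector S) = 2 * cutVal w S := by
  have h : ∀ i j, |cutVector S i - cutVector S j| =
      2 * ((if i ∈ S ∧ j ∉ S then 1 else 0) + if j ∈ S ∧ i ∉ S then 1 else 0) := by
    intro i j
    unfold cutVector
    by_cases hi : i ∈ S <;> by_cases hj : j ∈ S <;> simp [hi, hj] <;> norm_num
  have hswap : ∑ i, ∑ j, w i j * (if j ∈ S ∧ i ∉ S then 1 else 0) = cutVal w S := by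
    rw [cutVal_eq_sum_mul_ite, sum_comm]
    simp_rw [hsym]
  simp only [Ifun, h, mul_add, mul_left_comm _ (2 : ℝ), sum_add_distrib, ← mul_sum, hswap,
    ← cutVal_eq_sum_mul_ite]
  ring

lemma Ifun_le_of_norm_le (w : Fin n → Fin n → ℝ) (hnn : ∀ i j, 0 ≤ w i j)
    {x y : Fin n → ℝ}
    (hmax : ∀ y : Fin n → ℝ, y ≠ 0 → Ifun w y / ‖y‖ ≤ Ifun w x / ‖x‖) (hy : y ≠ 0)
    (hyx : ‖y‖ ≤ ‖x‖) : Ifun w y ≤ Ifun w x := by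
  have hypos : 0 < ‖y‖ := norm_pos_iff.2 hy
  have hxpos : 0 < ‖x‖ := hypos.trans_le hyx
  have h := hmax y hy
  rw [div_le_div_iff₀ hypos hxpos] at h
  exact le_of_mul_le_mul_right
    (h.trans (mul_le_mul_of_nonneg_left hyx (Ifun.nonneg w hnn x))) hxpos

lemma Ifun_le_of_eqOn (w : Fin n → Fin n → ℝ) (hnn : ∀ i j, 0 ≤ w i j) {x : Fin n → ℝ}
    (hx : x ≠ 0) (hmax : ∀ y : Fin n → ℝ, y ≠ 0 → Ifun w y / ‖y‖ ≤ Ifun w x / ‖x‖)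
    {z : Fin n → ℝ} (hz : Set.EqOn z x {i | |x i| = ‖x‖}) : Ifun w x ≤ Ifun w z := by
  set y : ℝ → Fin n → ℝ := fun ε => (1 + ε) • x - ε • z
  have hy_cont : Continuous y := by fun_prop
  have hy_zero : y 0 = x := by simp [y]
  have hy_ne : ∀ᶠ ε in 𝓝 0, y ε ≠ 0 :=
    (hy_cont.tendsto 0).eventually_ne (hy_zero ▸ hx)
  have hy_norm : ∀ᶠ ε in 𝓝 0, ‖y ε‖ ≤ ‖x‖ := by
    simp only [pi_norm_le_iff_of_nonneg (norm_nonneg x), eventually_all]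
    intro i
    by_cases hi : |x i| = ‖x‖
    · refine Eventually.of_forall fun ε => ?_
      simp [y, hz hi, ← hi, add_mul]
    · have hlt : ‖y 0 i‖ < ‖x‖ := by
        simpa [hy_zero] using (lt_of_le_of_ne (norm_le_pi_norm x i) hi)
      exact (((continuous_apply i).comp hy_cont).norm.tendsto 0).eventually_lt_const hlt
        |>.mono fun _ => le_of_lt
  obtain ⟨ε, ⟨hne, hle⟩, hε : 0 < ε⟩ :=
    ((hy_ne.and hy_norm).filter_mono nhdsWithin_le_nhds |>.and
      (self_mem_nhdsWithin : ∀ᶠ ε in 𝓝[>] (0 : ℝ), 0 < ε)).exists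
  have hdecomp : (1 + ε) • x = y ε + ε • z := (sub_add_cancel _ _).symm
  have : (1 + ε) * Ifun w x ≤ Ifun w x + ε * Ifun w z :=
    calc (1 + ε) * Ifun w x = Ifun w (y ε + ε • z) := by
          rw [← hdecomp, Ifun.smul w x (by linarith)]
      _ ≤ Ifun w (y ε) + ε * Ifun w z := by
          rw [← Ifun.smul w z hε.le]; exact Ifun.add_le w hnn _ _
      _ ≤ Ifun w x + ε * Ifun w z := by
          gcongr; exact Ifun_le_of_norm_le w hnn hmax hne hle
  exact le_of_mul_le_mul_left (by linarith) hε

end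

/-- A maximizer of `F(x) = I(x)/‖x‖_∞` yields maximum cuts: any `S` with
`S⁺(x*) ⊆ S ⊆ V \ S⁻(x*)` realizes a maximum cut. -/
theorem stmt2 {n : ℕ} (w : Fin n → Fin n → ℝ)
    (hsym : ∀ i j, w i j = w j i) (hnn : ∀ i j, 0 ≤ w i j)
    (x : Fin n → ℝ) (hx : x ≠ 0)
    (hmax : ∀ y : Fin n → ℝ, y ≠ 0 → Ifun w y / ‖y‖ ≤ Ifun w x / ‖x‖)
    (S : Finset (Fin n))
    (hSp : ∀ i, x i = ‖x‖ → i ∈ S)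
    (hSm : ∀ i, i ∈ S → x i ≠ -‖x‖) :
    ∀ S' : Finset (Fin n), cutVal w S' ≤ cutVal w S := by
  intro S'
  have hxpos : 0 < ‖x‖ := norm_pos_iff.2 hx
  have : Nonempty (Fin n) := not_isEmpty_iff.1 fun _ => hx (Subsingleton.elim x 0)
  have hz : Set.EqOn (‖x‖ • cutVector S) x {i | |x i| = ‖x‖} := by
    intro i hi
    rcases (abs_eq hxpos.le).1 hi with h | h
    · simp [cutVector, hSp i h, h]
    · simp [cutVector, show i ∉ S from fun hS => hSm i hS h, h]
  have hupper : Ifun w x ≤ 2 * cutVal w S * ‖x‖ :=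
    calc Ifun w x ≤ Ifun w (‖x‖ • cutVector S) := Ifun_le_of_eqOn w hnn hx hmax hz
      _ = 2 * cutVal w S * ‖x‖ := by
        rw [Ifun.smul w _ hxpos.le, Ifun_cutVector w hsym]; ring
  have hlower : 2 * cutVal w S' ≤ Ifun w x / ‖x‖ := by
    have hv : cutVector S' ≠ 0 := norm_ne_zero_iff.1 (by simp [norm_cutVector])
    simpa [Ifun_cutVector w hsym, norm_cutVector] using hmax _ hv
  rw [le_div_iff₀ hxpos] at hlower
  exact le_of_mul_le_mul_right (by linarith) (mul_pos two_pos hxpos)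
end

section
/- Let x ≠ 0 in ℝ^n, r = I(x)/‖x‖_∞, and s ∈ ∂I(x). Then r ≤ ‖s‖_1. Moreover, r = ‖s‖_1 if and only if x/‖x‖_∞ ∈ Sgn(s) componentwise (i.e., x_i/‖x‖_∞ ∈ Sgn(s_i) for each i). -/
/-!
Since the sign matrix `z` is antisymmetric and the weights are symmetric, pairing `x` with
`s = ∑ⱼ wᵢⱼ zᵢⱼ` gives `⟨x, s⟩ = ½ ∑ᵢⱼ wᵢⱼ zᵢⱼ (xᵢ - xⱼ) = I(x)`. Hölder's inequality
`⟨x, s⟩ ≤ ‖x‖_∞ ‖s‖₁` gives the bound, with equality iff `xᵢ sᵢ = ‖x‖_∞ |sᵢ|` for every `i`;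
as `|xᵢ| ≤ ‖x‖_∞`, this says exactly that `xᵢ / ‖x‖_∞` is a sign of `sᵢ`.
-/

open Finset

noncomputable def SgnSet (t : ℝ) : Set ℝ :=
  if 0 < t then {1} else if t < 0 then {-1} else Set.Icc (-1) 1

noncomputable def subgrad {n : ℕ} (w : Fin n → Fin n → ℝ) (y : Fin n → ℝ) :
    Set (Fin n → ℝ) :=
  {s | ∃ z : Fin n → Fin n → ℝ, (∀ i j, z i j ∈ SgnSet (y i - y j)) ∧
    (∀ i j, z i j = - z j i) ∧ ∀ i, s i = ∑ j, w i j * z i j}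

lemma abs_le_one_of_mem_SgnSet {a t : ℝ} (h : a ∈ SgnSet t) : |a| ≤ 1 := by
  unfold SgnSet at h
  split_ifs at h
  · simp [Set.mem_singleton_iff.mp h]
  · simp [Set.mem_singleton_iff.mp h]
  · exact abs_le.mpr h

lemma mul_eq_abs_iff_mem_SgnSet {a t : ℝ} (ha : |a| ≤ 1) : a * t = |t| ↔ a ∈ SgnSet t := by
  unfold SgnSet
  rcases lt_trichotomy t 0 with ht | rfl | ht
  · rw [if_neg ht.not_gt, if_pos ht, Set.mem_singleton_iff, abs_of_neg ht, neg_eq_neg_one_mul,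
      mul_left_inj' ht.ne]
  · simpa using abs_le.mp ha
  · rw [if_pos ht, Set.mem_singleton_iff, abs_of_pos ht, mul_eq_right₀ ht.ne']

lemma mul_eq_abs_of_mem_SgnSet {a t : ℝ} (h : a ∈ SgnSet t) : a * t = |t| :=
  (mul_eq_abs_iff_mem_SgnSet (abs_le_one_of_mem_SgnSet h)).mpr h

lemma mul_eq_mul_abs_iff_div_mem_SgnSet {a c t : ℝ} (hc : 0 < c) (ha : |a| ≤ c) :
    a * t = c * |t| ↔ a / c ∈ SgnSet t := by
  have ha' : |a / c| ≤ 1 := by rwa [abs_div, abs_of_pos hc, div_le_one hc]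
  rw [← mul_eq_abs_iff_mem_SgnSet ha', div_mul_eq_mul_div, div_eq_iff hc.ne', mul_comm |t|]

section Holder

variable {ι : Type*} [Fintype ι] (x s : ι → ℝ)

lemma mul_le_norm_mul_abs (i : ι) : x i * s i ≤ ‖x‖ * |s i| :=
  calc x i * s i ≤ |x i| * |s i| := (le_abs_self _).trans (abs_mul _ _).le
    _ ≤ ‖x‖ * |s i| := by gcongr; exact norm_le_pi_norm x i

lemma sum_mul_le_norm_mul_sum_abs : ∑ i, x i * s i ≤ ‖x‖ * ∑ i, |s i| := by
  rw [mul_sum]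
  exact sum_le_sum fun i _ => mul_le_norm_mul_abs x s i

lemma sum_mul_eq_norm_mul_sum_abs_iff :
    ∑ i, x i * s i = ‖x‖ * ∑ i, |s i| ↔ ∀ i, x i * s i = ‖x‖ * |s i| := by
  rw [mul_sum, sum_eq_sum_iff_of_le fun i _ => mul_le_norm_mul_abs x s i]
  simp

end Holder

lemma sum_mul_eq_Ifun_of_mem_subgrad {n : ℕ} {w : Fin n → Fin n → ℝ}
    (hsym : ∀ i j, w i j = w j i) {x s : Fin n → ℝ} (hs : s ∈ subgrad w x) :
    ∑ i, x i * s i = Ifun w x := by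
  obtain ⟨z, hz_sgn, hz_anti, hs_eq⟩ := hs
  have hswap : ∑ i, ∑ j, w i j * z i j * x i = -∑ i, ∑ j, w i j * z i j * x j := by
    rw [sum_comm, ← sum_neg_distrib]
    refine sum_congr rfl fun i _ => ?_
    rw [← sum_neg_distrib]
    refine sum_congr rfl fun j _ => ?_
    rw [hsym j i, hz_anti j i]
    ring
  have hterm : ∀ i j, w i j * z i j * x i - w i j * z i j * x j = w i j * |x i - x j| :=
    fun i j => by linear_combination w i j * mul_eq_abs_of_mem_SgnSet (hz_sgn i j)
  calc ∑ i, x i * s i = ∑ i, ∑ j, w i j * z i j * x i := by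
        simp only [hs_eq, mul_sum]
        exact sum_congr rfl fun i _ => sum_congr rfl fun j _ => by ring
    _ = (1 / 2) * (∑ i, ∑ j, w i j * z i j * x i - ∑ i, ∑ j, w i j * z i j * x j) := by
        rw [hswap]; ring
    _ = Ifun w x := by simp only [Ifun, ← sum_sub_distrib, hterm]

theorem stmt8_general {n : ℕ} (w : Fin n → Fin n → ℝ)
    (hsym : ∀ i j, w i j = w j i)
    (x : Fin n → ℝ) (hx : x ≠ 0) (r : ℝ) (hr : r = Ifun w x / ‖x‖)
    (s : Fin n → ℝ) (hs : s ∈ subgrad w x) :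
    r ≤ ∑ i, |s i| ∧ (r = ∑ i, |s i| ↔ ∀ i, x i / ‖x‖ ∈ SgnSet (s i)) := by
  have hpos : 0 < ‖x‖ := norm_pos_iff.mpr hx
  rw [hr, ← sum_mul_eq_Ifun_of_mem_subgrad hsym hs, div_le_iff₀' hpos, div_eq_iff hpos.ne',
    mul_comm _ ‖x‖, sum_mul_eq_norm_mul_sum_abs_iff]
  exact ⟨sum_mul_le_norm_mul_sum_abs x s, forall_congr' fun i =>
    mul_eq_mul_abs_iff_div_mem_SgnSet hpos (norm_le_pi_norm x i)⟩

/-- For `x ≠ 0`, `r = I(x)/‖x‖_∞` and `s ∈ ∂I(x)`: `r ≤ ‖s‖₁`, with equality iff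
`x/‖x‖_∞ ∈ Sgn(s)` componentwise. -/
theorem stmt8 {n : ℕ} (w : Fin n → Fin n → ℝ)
    (hsym : ∀ i j, w i j = w j i) (hnn : ∀ i j, 0 ≤ w i j)
    (x : Fin n → ℝ) (hx : x ≠ 0) (r : ℝ) (hr : r = Ifun w x / ‖x‖)
    (s : Fin n → ℝ) (hs : s ∈ subgrad w x) :
    r ≤ ∑ i, |s i| ∧ (r = ∑ i, |s i| ↔ ∀ i, x i / ‖x‖ ∈ SgnSet (s i)) :=
  stmt8_general w hsym x hx r hr s hs
end

section
/- Fix p ∈ (1,∞), r > 0 and v ∈ ℝ^n with r < ‖v‖_1 and |v_1| ≥ |v_2| ≥ ⋯ ≥ |v_n| ≥ 0. Let m_0 be the smallest m ∈ {1,…,n} with A(m) > r, where A(m) = Σ_{j=1}^m (|v_j| − |v_{m+1}|) (with v_{n+1}=0), and set a_i = m_0|v_i| / (Σ_{j=1}^{m_0}|v_j| − r) and z*_i = min{1, a_i^{1/(p−1)}}. Then x* = (sign(v)·z*)/‖z*‖_p minimizes r‖x‖_∞ − ⟨x, v⟩ over {x : ‖x‖_p = 1}. -/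
open Finset

/-- The `p`-norm on `ℝ^n` for a real exponent `p`. -/
noncomputable def prnorm {n : ℕ} (p : ℝ) (x : Fin n → ℝ) : ℝ :=
  (∑ i, |x i| ^ p) ^ (1 / p)

/-- Exact solution of the inner subproblem, Scenario 1 (`1 < p < ∞`, `r < ‖v‖₁`):
with `m₀` the smallest `m` with `A(m) > r`, `a_i = m₀|v_i|/(Σ_{j≤m₀}|v_j| − r)` and
`z*_i = min{1, a_i^{1/(p−1)}}`, the vector `x* = sign(v)·z*/‖z*‖_p` minimizes
`r‖x‖_∞ − ⟨x,v⟩` over the unit `p`-sphere.  (Indices are 0-based: `a j` is `|v_{j+1}|`.) -/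
theorem stmt11 {n : ℕ} (p : ℝ) (hp : 1 < p)
    (v : Fin n → ℝ) (r : ℝ) (hr : 0 < r) (hlt : r < ∑ i, |v i|)
    (hord : ∀ i j : Fin n, i ≤ j → |v j| ≤ |v i|)
    (a : ℕ → ℝ) (ha : ∀ j, a j = if h : j < n then |v ⟨j, h⟩| else 0)
    (A : ℕ → ℝ) (hA : ∀ m, A m = ∑ j ∈ Finset.range m, (a j - a m))
    (m₀ : ℕ) (hm₀ : m₀ = sInf {m : ℕ | 1 ≤ m ∧ r < A m})
    (z : Fin n → ℝ)
    (hz : ∀ i, z i =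
      min 1 (((m₀ : ℝ) * |v i| / ((∑ j ∈ Finset.range m₀, a j) - r)) ^ (1 / (p - 1))))
    (xs : Fin n → ℝ)
    (hxs : ∀ i, xs i = (if v i < 0 then (-1 : ℝ) else 1) * z i / prnorm p z) :
    prnorm p xs = 1 ∧ ∀ y : Fin n → ℝ, prnorm p y = 1 →
      r * ‖xs‖ - ∑ i, xs i * v i ≤ r * ‖y‖ - ∑ i, y i * v i := by
  have hp0 : (0:ℝ) < p := lt_trans one_pos hp
  have hp1 : (0:ℝ) < p - 1 := by linarith
  have hpne : p ≠ 0 := ne_of_gt hp0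
  have hp1ne : p - 1 ≠ 0 := ne_of_gt hp1
  -- n ≥ 1
  have hn : 0 < n := by
    by_contra h
    have : n = 0 := by omega
    subst this
    simp at hlt; linarith
  -- basic facts about a
  have hanneg : ∀ j, 0 ≤ a j := by
    intro j; rw [ha]; split
    · exact abs_nonneg _
    · exact le_refl 0
  have hamono : ∀ i j : ℕ, i ≤ j → a j ≤ a i := by
    intro i j hij
    rw [ha, ha]
    by_cases hjn : j < n
    · have hin : i < n := lt_of_le_of_lt hij hjn
      rw [dif_pos hjn, dif_pos hin]
      exact hord ⟨i, hin⟩ ⟨j, hjn⟩ hij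
    · rw [dif_neg hjn]; split
      · exact abs_nonneg _
      · exact le_refl 0
  have hai : ∀ i : Fin n, |v i| = a i.val := by
    intro i; rw [ha]; rw [dif_pos i.isLt]
  -- the set defining m₀
  have hAn : A n = ∑ i, |v i| := by
    rw [hA]
    have han : a n = 0 := by rw [ha, dif_neg (lt_irrefl n)]
    rw [han]
    simp only [sub_zero]
    rw [← Fin.sum_univ_eq_sum_range a n]
    exact Finset.sum_congr rfl fun i _ => (hai i).symm
  have hnmem : n ∈ {m : ℕ | 1 ≤ m ∧ r < A m} := ⟨hn, by rw [hAn]; exact hlt⟩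
  have hm₀mem : 1 ≤ m₀ ∧ r < A m₀ := by
    rw [hm₀]; exact Nat.sInf_mem ⟨n, hnmem⟩
  have hm₀le : m₀ ≤ n := by rw [hm₀]; exact Nat.sInf_le hnmem
  have hm₀pos : 0 < m₀ := hm₀mem.1
  have hm₀R : (0:ℝ) < (m₀:ℝ) := by exact_mod_cast hm₀pos
  set T : ℝ := ∑ j ∈ Finset.range m₀, a j with hT
  set t : ℝ := T - r with htdef
  set c : ℝ := t / m₀ with hcdef
  have hAm₀ : A m₀ = T - m₀ * a m₀ := by
    rw [hA, Finset.sum_sub_distrib, Finset.sum_const, Finset.card_range, nsmul_eq_mul]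
  have htgt : (m₀:ℝ) * a m₀ < t := by
    have := hm₀mem.2; rw [hAm₀] at this; rw [htdef]; linarith
  have ht0 : 0 < t :=
    lt_of_le_of_lt (mul_nonneg (le_of_lt hm₀R) (hanneg m₀)) htgt
  have hc0 : 0 < c := div_pos ht0 hm₀R
  have hm₀c : (m₀:ℝ) * c = t := by
    rw [hcdef]; field_simp
  have hca : a m₀ < c := by
    rw [hcdef, lt_div_iff₀ hm₀R]; linarith [htgt]
  -- for indices below m₀, a j ≥ c
  have hge : ∀ j, j < m₀ → c ≤ a j := by
    intro j hj
    have key : c ≤ a (m₀ - 1) := by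
      rcases Nat.lt_or_ge m₀ 2 with h2 | h2
      · -- m₀ = 1
        have hm1 : m₀ = 1 := by omega
        subst hm1
        simp only [Nat.sub_self]
        rw [hcdef]
        have hT1 : T = a 0 := by rw [hT]; simp
        rw [hT1] at htdef
        rw [div_le_iff₀ hm₀R]
        push_cast
        rw [htdef]; linarith
      · -- m₀ ≥ 2 : use minimality at m₀ - 1
        have hlt' : m₀ - 1 < m₀ := by omega
        have hnot : m₀ - 1 ∉ {m : ℕ | 1 ≤ m ∧ r < A m} := by
          apply Nat.notMem_of_lt_sInf; rw [← hm₀]; exact hlt'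
        have h1le : 1 ≤ m₀ - 1 := by omega
        have hAle : A (m₀ - 1) ≤ r := by
          by_contra h
          exact hnot ⟨h1le, lt_of_not_ge h⟩
        have hsplit : T = (∑ j ∈ Finset.range (m₀ - 1), a j) + a (m₀ - 1) := by
          rw [hT, ← Finset.sum_range_succ, Nat.sub_add_cancel hm₀pos]
        have hA' : A (m₀ - 1) = (∑ j ∈ Finset.range (m₀ - 1), a j)
            - (m₀ - 1 : ℕ) * a (m₀ - 1) := by
          rw [hA, Finset.sum_sub_distrib, Finset.sum_const, Finset.card_range, nsmul_eq_mul]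
        have hcast : ((m₀ - 1 : ℕ) : ℝ) = (m₀ : ℝ) - 1 := by
          push_cast [Nat.cast_sub hm₀pos]; ring
        rw [hcdef, div_le_iff₀ hm₀R]
        rw [hA', hcast] at hAle
        rw [htdef, hsplit]
        nlinarith [hanneg (m₀ - 1)]
    exact le_trans key (hamono j (m₀ - 1) (by omega))
  -- rewrite z
  have hzi : ∀ i : Fin n, z i = min 1 ((a i.val / c) ^ (1 / (p - 1))) := by
    intro i
    rw [hz, hai]
    congr 2
    rw [hcdef, div_div_eq_mul_div]
    ring
  have hz0 : ∀ i, 0 ≤ z i := by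
    intro i
    rw [hzi]
    exact le_min zero_le_one (Real.rpow_nonneg (div_nonneg (hanneg _) (le_of_lt hc0)) _)
  have hz1 : ∀ i, z i ≤ 1 := by intro i; rw [hzi]; exact min_le_left _ _
  -- the key pow identity
  have hzp : ∀ i : Fin n, c * z i ^ (p - 1) = min c (a i.val) := by
    intro i
    rw [hzi]
    rcases le_total c (a i.val) with h | h
    · have hu : (1:ℝ) ≤ a i.val / c := (one_le_div hc0).mpr h
      have : (1:ℝ) ≤ (a i.val / c) ^ (1 / (p - 1)) :=
        Real.one_le_rpow hu (by positivity)
      rw [min_eq_left this, Real.one_rpow, mul_one, min_eq_left h]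
    · have hu0 : (0:ℝ) ≤ a i.val / c := div_nonneg (hanneg _) (le_of_lt hc0)
      have hu : a i.val / c ≤ 1 := (div_le_one hc0).mpr h
      have hle1 : (a i.val / c) ^ (1 / (p - 1)) ≤ 1 :=
        Real.rpow_le_one hu0 hu (by positivity)
      rw [min_eq_right hle1, ← Real.rpow_mul hu0, one_div_mul_cancel hp1ne,
        Real.rpow_one, min_eq_right h]
      field_simp
  have hzone : ∀ i : Fin n, i.val < m₀ → z i = 1 := by
    intro i hi
    rw [hzi]
    have hu : (1:ℝ) ≤ a i.val / c := (one_le_div hc0).mpr (hge i.val hi)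
    exact min_eq_left (Real.one_le_rpow hu (by positivity))
  set i0 : Fin n := ⟨0, hn⟩ with hi0
  have hz00 : z i0 = 1 := hzone i0 hm₀pos
  -- sums
  set Sz : ℝ := ∑ i, z i ^ p with hSz
  have hSz1 : 1 ≤ Sz := by
    have : z i0 ^ p ≤ Sz := by
      apply Finset.single_le_sum (f := fun i => z i ^ p) _ (Finset.mem_univ i0)
      intro i _
      exact Real.rpow_nonneg (hz0 i) p
    rwa [hz00, Real.one_rpow] at this
  have hSz0 : (0:ℝ) < Sz := lt_of_lt_of_le one_pos hSz1
  set N : ℝ := prnorm p z with hN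
  have hNval : N = Sz ^ (1 / p) := by
    rw [hN, prnorm, hSz]
    congr 1
    exact Finset.sum_congr rfl fun i _ => by rw [abs_of_nonneg (hz0 i)]
  have hN1 : 1 ≤ N := by
    rw [hNval]
    exact Real.one_le_rpow hSz1 (by positivity)
  have hN0 : (0:ℝ) < N := lt_of_lt_of_le one_pos hN1
  have hNp : N ^ p = Sz := by
    rw [hNval, ← Real.rpow_mul (le_of_lt hSz0), one_div_mul_cancel hpne, Real.rpow_one]
  -- properties of xs
  have hxsabs : ∀ i, |xs i| = z i / N := by
    intro i
    rw [hxs]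
    rw [abs_div, abs_mul, abs_of_pos hN0]
    congr 1
    rcases lt_or_ge (v i) 0 with h | h
    · rw [if_pos h]; simp [abs_of_nonneg (hz0 i)]
    · rw [if_neg (not_lt.mpr h)]; simp [abs_of_nonneg (hz0 i)]
  have hxsnorm : ‖xs‖ = 1 / N := by
    apply le_antisymm
    · apply (pi_norm_le_iff_of_nonneg (by positivity)).mpr
      intro i
      rw [Real.norm_eq_abs, hxsabs]
      exact div_le_div_of_nonneg_right (hz1 i) (le_of_lt hN0) |>.trans_eq rfl
    · calc 1 / N = |xs i0| := by rw [hxsabs, hz00]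
        _ ≤ ‖xs‖ := by rw [← Real.norm_eq_abs]; exact norm_le_pi_norm xs i0
  -- prnorm p xs = 1
  have hxs1 : prnorm p xs = 1 := by
    rw [prnorm]
    have : ∀ i : Fin n, |xs i| ^ p = z i ^ p / Sz := by
      intro i
      rw [hxsabs, Real.div_rpow (hz0 i) (le_of_lt hN0), hNp]
    rw [Finset.sum_congr rfl fun i _ => this i, ← Finset.sum_div, ← hSz,
      div_self (ne_of_gt hSz0), Real.one_rpow]
  refine ⟨hxs1, ?_⟩
  -- the multiplier vector
  set lam : Fin n → ℝ := fun i => if i.val < m₀ then a i.val - c else 0 with hlam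
  have hlamnn : ∀ i, 0 ≤ lam i := by
    intro i
    rw [hlam]
    dsimp only
    split
    · linarith [hge i.val (by assumption)]
    · exact le_refl 0
  have hlamsum : ∑ i, lam i = r := by
    have h1 : ∑ i, lam i = ∑ j ∈ Finset.range n, (if j < m₀ then a j - c else 0) := by
      exact Fin.sum_univ_eq_sum_range (fun j => if j < m₀ then a j - c else 0) n
    rw [h1]
    have h2 : ∑ j ∈ Finset.range n, (if j < m₀ then a j - c else 0)
        = ∑ j ∈ Finset.range m₀, (a j - c) := by
      rw [← Finset.sum_subset (Finset.range_subset_range.mpr hm₀le)]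
      · exact Finset.sum_congr rfl fun j hj =>
          if_pos (Finset.mem_range.mp hj)
      · intro j _ hj
        exact if_neg (fun h => hj (Finset.mem_range.mpr h))
    rw [h2, Finset.sum_sub_distrib, Finset.sum_const, Finset.card_range, nsmul_eq_mul,
      ← hT, hm₀c, htdef]
    ring
  -- per-term decomposition : z i * a i = c * z i ^ p + lam i
  have hdecomp : ∀ i : Fin n, z i * a i.val = c * z i ^ p + lam i := by
    intro i
    rcases Nat.lt_or_ge i.val m₀ with h | h
    · rw [hzone i h, hlam]
      dsimp only
      rw [if_pos h, Real.one_rpow]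
      ring
    · have hlam0 : lam i = 0 := by rw [hlam]; exact if_neg (by omega)
      have hac : a i.val < c := lt_of_le_of_lt (hamono m₀ i.val h) hca
      have hmin : min c (a i.val) = a i.val := min_eq_right (le_of_lt hac)
      have := hzp i
      rw [hmin] at this
      rw [hlam0, add_zero, ← this]
      rcases eq_or_lt_of_le (hz0 i) with h0 | h0
      · rw [← h0]
        simp [Real.zero_rpow hpne, Real.zero_rpow hp1ne]
      · have : z i ^ p = z i * z i ^ (p - 1) := by
          rw [← Real.rpow_one_add' (le_of_lt h0) (by rw [add_sub_cancel]; exact hpne)]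
          ring_nf
        rw [this]; ring
  have hZW : ∑ i, z i * a i.val = c * Sz + r := by
    rw [Finset.sum_congr rfl fun i _ => hdecomp i, Finset.sum_add_distrib, hlamsum,
      ← Finset.mul_sum, ← hSz]
  -- value of objective at xs
  have hxsval : ∀ i, xs i * v i = z i * a i.val / N := by
    intro i
    rw [hxs]
    rcases lt_or_ge (v i) 0 with h | h
    · rw [if_pos h, ← hai, abs_of_neg h]; ring
    · rw [if_neg (not_lt.mpr h), ← hai, abs_of_nonneg h]; ring
  have hfxs : r * ‖xs‖ - ∑ i, xs i * v i = -(c * Sz / N) := by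
    rw [hxsnorm, Finset.sum_congr rfl fun i _ => hxsval i, ← Finset.sum_div, hZW]
    field_simp; ring
  -- conjugate exponent
  set q : ℝ := p / (p - 1) with hq
  have hpq : p.HolderConjugate q := Real.HolderConjugate.conjExponent hp
  have hq0 : 0 < q := hpq.symm.pos
  have hqne : q ≠ 0 := ne_of_gt hq0
  have h1q : 1 / q = 1 - 1 / p := by
    rw [hq]; field_simp
  have hpq' : (p - 1) * q = p := by rw [hq]; field_simp
  -- ∑ (min c (a i))^q = c^q * Sz
  have hminq : ∑ i : Fin n, (min c (a i.val)) ^ q = c ^ q * Sz := by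
    rw [hSz, Finset.mul_sum]
    apply Finset.sum_congr rfl
    intro i _
    rw [← hzp i, Real.mul_rpow (le_of_lt hc0) (Real.rpow_nonneg (hz0 i) _),
      ← Real.rpow_mul (hz0 i), hpq']
  have hSzN : Sz / N = Sz ^ (1 / q) := by
    rw [hNval, h1q, Real.rpow_sub hSz0, Real.rpow_one]
  -- main inequality
  intro y hy
  have hSy : ∑ i, |y i| ^ p = 1 := by
    have h0 : (0:ℝ) ≤ ∑ i, |y i| ^ p :=
      Finset.sum_nonneg fun i _ => Real.rpow_nonneg (abs_nonneg _) _
    have := congrArg (fun x : ℝ => x ^ p) hy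
    simp only [prnorm] at this
    rwa [← Real.rpow_mul h0, one_div_mul_cancel hpne, Real.rpow_one, Real.one_rpow] at this
  -- r‖y‖ ≥ ∑ lam i * |y i|
  have hylam : ∑ i, lam i * |y i| ≤ r * ‖y‖ := by
    rw [← hlamsum, Finset.sum_mul]
    apply Finset.sum_le_sum
    intro i _
    apply mul_le_mul_of_nonneg_left _ (hlamnn i)
    rw [← Real.norm_eq_abs]
    exact norm_le_pi_norm y i
  -- Hölder
  have hhold : ∑ i, |y i| * min c (a i.val) ≤ c * Sz ^ (1 / q) := by
    have h := Real.inner_le_Lp_mul_Lq_of_nonneg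
      (s := (Finset.univ : Finset (Fin n)))
      (f := fun i => |y i|) (g := fun i => min c (a i.val)) hpq
      (fun i _ => abs_nonneg _)
      (fun i _ => le_min (le_of_lt hc0) (hanneg _))
    rw [hSy, Real.one_rpow, one_mul, hminq] at h
    calc ∑ i, |y i| * min c (a i.val) ≤ (c ^ q * Sz) ^ (1 / q) := h
      _ = c * Sz ^ (1 / q) := by
          rw [Real.mul_rpow (Real.rpow_nonneg (le_of_lt hc0) _) (le_of_lt hSz0),
            ← Real.rpow_mul (le_of_lt hc0), mul_one_div, div_self hqne, Real.rpow_one]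
  -- assemble
  have hyv : ∑ i, y i * v i ≤ ∑ i, |y i| * a i.val := by
    apply Finset.sum_le_sum
    intro i _
    calc y i * v i ≤ |y i * v i| := le_abs_self _
      _ = |y i| * a i.val := by rw [abs_mul, hai]
  have hsplitA : ∀ i : Fin n, (a i.val : ℝ) = lam i + min c (a i.val) := by
    intro i
    rcases Nat.lt_or_ge i.val m₀ with h | h
    · rw [hlam]
      dsimp only
      rw [if_pos h, min_eq_left (hge i.val h)]
      ring
    · rw [hlam]
      dsimp only
      rw [if_neg (by omega),
        min_eq_right (le_of_lt (lt_of_le_of_lt (hamono m₀ i.val h) hca))]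
      ring
  have hfinal : ∑ i, |y i| * a i.val ≤ r * ‖y‖ + c * Sz ^ (1 / q) := by
    calc ∑ i, |y i| * a i.val
        = ∑ i, (lam i * |y i| + |y i| * min c (a i.val)) := by
          apply Finset.sum_congr rfl
          intro i _
          conv_lhs => rw [hsplitA i]
          ring
      _ = (∑ i, lam i * |y i|) + ∑ i, |y i| * min c (a i.val) :=
          Finset.sum_add_distrib
      _ ≤ r * ‖y‖ + c * Sz ^ (1 / q) := add_le_add hylam hhold
  rw [hfxs]
  have : c * Sz / N = c * Sz ^ (1 / q) := by
    rw [mul_div_assoc, hSzN]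
  rw [this]
  linarith
end

section
/- Fix p ∈ (1,∞), r > 0, v ∈ ℝ^n with r < ‖v‖_1 and |v_1| ≥ ⋯ ≥ |v_n|. Any minimizer z* of G(z) = (r − ⟨z, |v|⟩)/‖z‖_p over the box B_∞ = {z : ‖z‖_∞ ≤ 1} has all components nonnegative and ordered: z*_i ≥ z*_j whenever |v_i| > |v_j|, and more precisely (z*_i − z*_j)(|v_i| − |v_j|) ≥ 0 for all i, j. -/
/-!
If a minimizer `z` had a negative coordinate, setting it to `0` would not decrease `⟨z, w⟩` and
would strictly decrease `‖z‖_p`; if `z` were not ordered like `w = |v|`, swapping two coordinates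
would keep `‖z‖_p` and strictly increase `⟨z, w⟩`. Since the minimum value is negative, either
change strictly decreases `G`.
-/

open Finset

section prnorm

variable {n : ℕ} {p : ℝ}

lemma prnorm_nonneg (p : ℝ) (x : Fin n → ℝ) : 0 ≤ prnorm p x := by
  unfold prnorm; positivity

lemma prnorm_pos_of_ne_zero {x : Fin n → ℝ} {i : Fin n} (hx : x i ≠ 0) : 0 < prnorm p x := by
  refine Real.rpow_pos_of_pos (lt_of_lt_of_le ?_ (single_le_sum (fun k _ => ?_) (mem_univ i))) _
  · exact Real.rpow_pos_of_pos (abs_pos.mpr hx) p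
  · positivity

lemma prnorm_pos_of_sum_mul_pos {x w : Fin n → ℝ} (h : 0 < ∑ i, x i * w i) :
    0 < prnorm p x := by
  obtain ⟨i, -, hi⟩ := exists_ne_zero_of_sum_ne_zero h.ne'
  exact prnorm_pos_of_ne_zero (left_ne_zero_of_mul hi)

lemma prnorm_lt_prnorm {x y : Fin n → ℝ} (hp : 0 < p) (h : ∀ i, |x i| ≤ |y i|) {i : Fin n}
    (hi : |x i| < |y i|) : prnorm p x < prnorm p y := by
  refine Real.rpow_lt_rpow (by positivity) ?_ (by positivity)
  exact sum_lt_sum (fun k _ => Real.rpow_le_rpow (abs_nonneg _) (h k) hp.le)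
    ⟨i, mem_univ _, Real.rpow_lt_rpow (abs_nonneg _) hi hp⟩

lemma prnorm_comp_perm (σ : Equiv.Perm (Fin n)) (x : Fin n → ℝ) :
    prnorm p (x ∘ σ) = prnorm p x := by
  unfold prnorm
  exact congrArg (· ^ (1 / p)) (Equiv.sum_comp σ fun k => |x k| ^ p)

end prnorm

lemma sum_comp_swap_mul_sub_sum_mul {ι R : Type*} [Fintype ι] [DecidableEq ι] [CommRing R]
    (f g : ι → R) {i j : ι} (hij : i ≠ j) :
    ∑ k, f (Equiv.swap i j k) * g k - ∑ k, f k * g k = (f i - f j) * (g j - g i) := by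
  rw [← sum_sub_distrib, Fintype.sum_eq_add i j hij fun k hk => ?_]
  · simp only [Equiv.swap_apply_left, Equiv.swap_apply_right]
    ring
  · rw [Equiv.swap_apply_of_ne_of_ne hk.1 hk.2, sub_self]

lemma mem_closedBall_zero_one_iff {n : ℕ} {y : Fin n → ℝ} :
    y ∈ Metric.closedBall (0 : Fin n → ℝ) 1 ↔ ∀ i, |y i| ≤ 1 := by
  rw [mem_closedBall_zero_iff, pi_norm_le_iff_of_nonneg zero_le_one]
  rfl

/-- The paper's `G`, with the weight vector `w` in place of `|v|`. -/
noncomputable def ratioObjective {n : ℕ} (p r : ℝ) (w z : Fin n → ℝ) : ℝ :=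
  (r - ∑ i, z i * w i) / prnorm p z

section ratioObjective

variable {n : ℕ} {p r : ℝ} {w z : Fin n → ℝ}

lemma ratioObjective_neg_iff :
    ratioObjective p r w z < 0 ↔ r < ∑ i, z i * w i ∧ 0 < prnorm p z := by
  unfold ratioObjective
  rw [div_neg_iff, sub_neg, sub_pos]
  have := prnorm_nonneg p z
  constructor
  · rintro (⟨-, h⟩ | h)
    · linarith
    · exact h
  · exact Or.inr

lemma ratioObjective_one_neg (hr : 0 ≤ r) (hlt : r < ∑ i, w i) : ratioObjective p r w 1 < 0 := by
  have hsum : ∑ i, (1 : Fin n → ℝ) i * w i = ∑ i, w i := by simp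
  exact ratioObjective_neg_iff.mpr
    ⟨hsum ▸ hlt, prnorm_pos_of_sum_mul_pos (hsum ▸ hr.trans_lt hlt)⟩

lemma ratioObjective_lt_of_improves {y : Fin n → ℝ} (hz : ratioObjective p r w z < 0)
    (hy : 0 < prnorm p y) (hN : prnorm p y ≤ prnorm p z) (hL : ∑ i, z i * w i ≤ ∑ i, y i * w i)
    (hstrict : ∑ i, z i * w i < ∑ i, y i * w i ∨ prnorm p y < prnorm p z) :
    ratioObjective p r w y < ratioObjective p r w z := by
  obtain ⟨hrz, hNz⟩ := ratioObjective_neg_iff.mp hz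
  unfold ratioObjective
  rw [div_lt_div_iff₀ hy hNz]
  rcases hstrict with h | h <;> nlinarith

lemma nonneg_of_isMinOn_ratioObjective (hp : 0 < p) (hr : 0 ≤ r) (hw : ∀ i, 0 ≤ w i)
    (hmin : IsMinOn (ratioObjective p r w) (Metric.closedBall 0 1) z)
    (hz : z ∈ Metric.closedBall 0 1) (hneg : ratioObjective p r w z < 0) (i : Fin n) :
    0 ≤ z i := by
  by_contra! hi
  set y := Function.update z i 0
  have hyz : ∀ k, |y k| ≤ |z k| := fun k => by
    rcases eq_or_ne k i with rfl | hk
    · simp [y]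
    · simp [y, hk]
  have hy : y ∈ Metric.closedBall 0 1 := mem_closedBall_zero_one_iff.mpr fun k =>
    (hyz k).trans (mem_closedBall_zero_one_iff.mp hz k)
  have hL : ∑ k, z k * w k ≤ ∑ k, y k * w k := sum_le_sum fun k _ => by
    rcases eq_or_ne k i with rfl | hk
    · simpa [y] using mul_nonpos_of_nonpos_of_nonneg hi.le (hw k)
    · simp [y, hk]
  have hN : prnorm p y < prnorm p z := prnorm_lt_prnorm hp hyz (i := i) (by simpa [y] using hi.ne)
  have hy_pos : 0 < prnorm p y :=
    prnorm_pos_of_sum_mul_pos (hr.trans_lt ((ratioObjective_neg_iff.mp hneg).1.trans_le hL))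
  exact (ratioObjective_lt_of_improves hneg hy_pos hN.le hL (Or.inr hN)).not_ge
    (isMinOn_iff.mp hmin y hy)

lemma monovary_of_isMinOn_ratioObjective
    (hmin : IsMinOn (ratioObjective p r w) (Metric.closedBall 0 1) z)
    (hz : z ∈ Metric.closedBall 0 1) (hneg : ratioObjective p r w z < 0) : Monovary z w := by
  intro i j hw
  by_contra! hzij
  set y := z ∘ Equiv.swap i j
  have hy : y ∈ Metric.closedBall 0 1 :=
    mem_closedBall_zero_one_iff.mpr fun k => mem_closedBall_zero_one_iff.mp hz _
  have hN : prnorm p y = prnorm p z := prnorm_comp_perm _ z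
  have hL : ∑ k, z k * w k < ∑ k, y k * w k := by
    have hswap := sum_comp_swap_mul_sub_sum_mul z w (ne_of_apply_ne w hw.ne)
    have hgain : 0 < (z i - z j) * (w j - w i) := mul_pos (sub_pos.mpr hzij) (sub_pos.mpr hw)
    simp only [y, Function.comp_apply]
    linarith
  exact (ratioObjective_lt_of_improves hneg (hN ▸ (ratioObjective_neg_iff.mp hneg).2) hN.le hL.le
    (Or.inl hL)).not_ge (isMinOn_iff.mp hmin y hy)

end ratioObjective

theorem stmt12_general {n : ℕ} (p : ℝ) (hp : 1 < p)
    (v : Fin n → ℝ) (r : ℝ) (hr : 0 < r) (hlt : r < ∑ i, |v i|)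
    (zs : Fin n → ℝ) (hzs : ‖zs‖ ≤ 1)
    (hmin : ∀ y : Fin n → ℝ, ‖y‖ ≤ 1 →
      (r - ∑ i, zs i * |v i|) / prnorm p zs ≤ (r - ∑ i, y i * |v i|) / prnorm p y) :
    (∀ i, 0 ≤ zs i) ∧ (∀ i j : Fin n, |v j| < |v i| → zs j ≤ zs i) ∧
      ∀ i j : Fin n, 0 ≤ (zs i - zs j) * (|v i| - |v j|) := by
  have hz : zs ∈ Metric.closedBall 0 1 := mem_closedBall_zero_iff.mpr hzs
  have hmin' : IsMinOn (ratioObjective p r fun i => |v i|) (Metric.closedBall 0 1) zs :=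
    isMinOn_iff.mpr fun y hy => hmin y (mem_closedBall_zero_iff.mp hy)
  have hneg : ratioObjective p r (fun i => |v i|) zs < 0 :=
    (isMinOn_iff.mp hmin' 1 (mem_closedBall_zero_one_iff.mpr fun i => by simp)).trans_lt
      (ratioObjective_one_neg hr.le hlt)
  have hmono := monovary_of_isMinOn_ratioObjective hmin' hz hneg
  exact ⟨nonneg_of_isMinOn_ratioObjective (by linarith) hr.le (fun i => abs_nonneg _) hmin' hz hneg,
    fun i j h => hmono h, fun i j => hmono.sub_mul_sub_nonneg j i⟩

/-- Any minimizer `z*` of `G(z) = (r − ⟨z,|v|⟩)/‖z‖_p` over the box `B_∞` has nonnegative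
components ordered like `|v|`. -/
theorem stmt12 {n : ℕ} (p : ℝ) (hp : 1 < p)
    (v : Fin n → ℝ) (r : ℝ) (hr : 0 < r) (hlt : r < ∑ i, |v i|)
    (hord : ∀ i j : Fin n, i ≤ j → |v j| ≤ |v i|)
    (zs : Fin n → ℝ) (hzs : ‖zs‖ ≤ 1)
    (hmin : ∀ y : Fin n → ℝ, ‖y‖ ≤ 1 →
      (r - ∑ i, zs i * |v i|) / prnorm p zs ≤ (r - ∑ i, y i * |v i|) / prnorm p y) :
    (∀ i, 0 ≤ zs i) ∧ (∀ i j : Fin n, |v j| < |v i| → zs j ≤ zs i) ∧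
      ∀ i j : Fin n, 0 ≤ (zs i - zs j) * (|v i| - |v j|) :=
  stmt12_general p hp v r hr hlt zs hzs hmin
end

section
/- For r > 0, v ∈ ℝ^n, and p ∈ [1,∞], the problem min_{‖x‖_p = 1} ( r‖x‖_∞ − ⟨x,v⟩ ) has the same minimum value as min_{z ∈ B_∞, z ≠ 0} (r − ⟨z, |v|⟩)/‖z‖_p, where B_∞ is the closed unit ball of the sup-norm; moreover the latter minimum is achieved at a point with ‖z‖_∞ = 1. -/
open Finset
open scoped ENNReal

noncomputable def pnorm {n : ℕ} (p : ℝ≥0∞) (x : Fin n → ℝ) : ℝ :=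
  if p = ⊤ then ‖x‖ else (∑ i, |x i| ^ p.toReal) ^ (1 / p.toReal)

section aux
variable {n : ℕ} {p : ℝ≥0∞}

lemma one_le_toReal (hp : 1 ≤ p) (ht : p ≠ ⊤) : 1 ≤ p.toReal := by
  rw [show (1:ℝ) = (1:ℝ≥0∞).toReal by simp]
  exact ENNReal.toReal_mono ht hp

lemma norm_homog {x y : Fin n → ℝ} {c : ℝ} (hc : 0 ≤ c)
    (h : ∀ i, |y i| = c * |x i|) : ‖y‖ = c * ‖x‖ := by
  have h1 : ‖y‖ = ‖c • x‖ := by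
    rw [Pi.norm_def, Pi.norm_def]
    congr 1
    apply Finset.sup_congr rfl
    intro i _
    ext
    simp only [coe_nnnorm, Real.norm_eq_abs, Pi.smul_apply, smul_eq_mul, abs_mul,
      abs_of_nonneg hc, h i]
  rw [h1, norm_smul, Real.norm_eq_abs, abs_of_nonneg hc]

lemma pnorm_homog (hp : 1 ≤ p) {x y : Fin n → ℝ} {c : ℝ} (hc : 0 ≤ c)
    (h : ∀ i, |y i| = c * |x i|) : pnorm p y = c * pnorm p x := by
  unfold pnorm
  by_cases htop : p = ⊤
  · simp [htop, norm_homog hc h]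
  · simp only [htop, if_false]
    have ht : 1 ≤ p.toReal := one_le_toReal hp htop
    have ht0 : p.toReal ≠ 0 := by linarith
    have h1 : ∑ i, |y i| ^ p.toReal = c ^ p.toReal * ∑ i, |x i| ^ p.toReal := by
      rw [Finset.mul_sum]
      refine Finset.sum_congr rfl fun i _ => ?_
      rw [h i, Real.mul_rpow hc (abs_nonneg _)]
    rw [h1, Real.mul_rpow (Real.rpow_nonneg hc _)
      (Finset.sum_nonneg fun i _ => Real.rpow_nonneg (abs_nonneg _) _),
      ← Real.rpow_mul hc, mul_one_div, div_self ht0, Real.rpow_one]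

lemma pnorm_zero (hp : 1 ≤ p) : pnorm p (0 : Fin n → ℝ) = 0 := by
  unfold pnorm
  by_cases htop : p = ⊤
  · simp [htop]
  · have ht : 1 ≤ p.toReal := one_le_toReal hp htop
    simp only [htop, if_false, Pi.zero_apply, abs_zero]
    rw [Real.zero_rpow (by linarith), Finset.sum_const, smul_zero,
      Real.zero_rpow (by positivity)]

lemma pnorm_nonneg (x : Fin n → ℝ) : 0 ≤ pnorm p x := by
  unfold pnorm
  by_cases htop : p = ⊤
  · simp [htop]
  · simp only [htop, if_false]
    exact Real.rpow_nonneg (Finset.sum_nonneg fun i _ => Real.rpow_nonneg (abs_nonneg _) _) _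

lemma pnorm_pos (hp : 1 ≤ p) {x : Fin n → ℝ} (hx : x ≠ 0) : 0 < pnorm p x := by
  unfold pnorm
  obtain ⟨i, hi⟩ := Function.ne_iff.mp hx
  by_cases htop : p = ⊤
  · simp only [htop, if_true]
    exact norm_pos_iff.mpr hx
  · simp only [htop, if_false]
    have ht : 1 ≤ p.toReal := one_le_toReal hp htop
    apply Real.rpow_pos_of_pos
    refine Finset.sum_pos' (fun j _ => Real.rpow_nonneg (abs_nonneg _) _) ⟨i, Finset.mem_univ i, ?_⟩
    exact Real.rpow_pos_of_pos (abs_pos.mpr hi) _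

lemma abs_le_pnorm (hp : 1 ≤ p) (x : Fin n → ℝ) (j : Fin n) : |x j| ≤ pnorm p x := by
  unfold pnorm
  by_cases htop : p = ⊤
  · simp only [htop, if_true]
    exact (Real.norm_eq_abs _ ▸ norm_le_pi_norm x j)
  · simp only [htop, if_false]
    have ht : 1 ≤ p.toReal := one_le_toReal hp htop
    have ht0 : p.toReal ≠ 0 := by linarith
    have h1 : |x j| = (|x j| ^ p.toReal) ^ (1 / p.toReal) := by
      rw [← Real.rpow_mul (abs_nonneg _), mul_one_div, div_self ht0, Real.rpow_one]
    rw [h1]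
    apply Real.rpow_le_rpow (Real.rpow_nonneg (abs_nonneg _) _)
    · exact Finset.single_le_sum (fun i _ => Real.rpow_nonneg (abs_nonneg _) _) (Finset.mem_univ j)
    · positivity

lemma norm_le_pnorm (hp : 1 ≤ p) (x : Fin n → ℝ) : ‖x‖ ≤ pnorm p x := by
  rw [pi_norm_le_iff_of_nonneg (pnorm_nonneg x)]
  intro i
  rw [Real.norm_eq_abs]
  exact abs_le_pnorm hp x i

lemma pnorm_continuous (hp : 1 ≤ p) : Continuous (pnorm p (n := n)) := by
  unfold pnorm
  by_cases htop : p = ⊤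
  · simp only [htop, if_true]
    exact continuous_norm
  · simp only [htop, if_false]
    have ht : 1 ≤ p.toReal := one_le_toReal hp htop
    have hsum : Continuous fun x : Fin n → ℝ => ∑ i, |x i| ^ p.toReal := by
      apply continuous_finset_sum
      intro i _
      have : Continuous fun y : ℝ => y ^ p.toReal :=
        continuous_iff_continuousAt.mpr fun y =>
          Real.continuousAt_rpow_const y _ (Or.inr (by linarith))
      exact this.comp ((continuous_apply i).abs)
    have : Continuous fun s : ℝ => s ^ (1 / p.toReal) :=
      continuous_iff_continuousAt.mpr fun y =>
        Real.continuousAt_rpow_const y _ (Or.inr (by positivity))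
    exact this.comp hsum

end aux

/-- The problem `min_{‖x‖_p=1} (r‖x‖_∞ − ⟨x,v⟩)` has the same minimum value as
`min_{z ∈ B_∞, z ≠ 0} (r − ⟨z,|v|⟩)/‖z‖_p`, and the latter minimum is attained at a
point of the boundary `‖z‖_∞ = 1`. -/
theorem stmt13 {n : ℕ} (hn : 0 < n) (p : ℝ≥0∞) (hp : 1 ≤ p)
    (r : ℝ) (hr : 0 < r) (v : Fin n → ℝ) :
    sInf {c : ℝ | ∃ x : Fin n → ℝ, pnorm p x = 1 ∧ c = r * ‖x‖ - ∑ i, x i * v i} =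
        sInf {c : ℝ | ∃ z : Fin n → ℝ, z ≠ 0 ∧ ‖z‖ ≤ 1 ∧
          c = (r - ∑ i, z i * |v i|) / pnorm p z} ∧
      ∃ z : Fin n → ℝ, ‖z‖ = 1 ∧
        (r - ∑ i, z i * |v i|) / pnorm p z =
          sInf {c : ℝ | ∃ z' : Fin n → ℝ, z' ≠ 0 ∧ ‖z'‖ ≤ 1 ∧
            c = (r - ∑ i, z' i * |v i|) / pnorm p z'} := by
  haveI hne : Nonempty (Fin n) := ⟨⟨0, hn⟩⟩
  set s : Fin n → ℝ := fun i => if v i < 0 then -1 else 1 with hs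
  have hs_abs : ∀ i, |s i| = 1 := by
    intro i; by_cases h : v i < 0 <;> simp [hs, h]
  have hsv : ∀ i, s i * |v i| = v i := by
    intro i; by_cases h : v i < 0
    · simp [hs, h, abs_of_neg h]
    · simp [hs, h, abs_of_nonneg (not_lt.1 h)]
  have hsv2 : ∀ i, s i * v i = |v i| := by
    intro i; by_cases h : v i < 0
    · simp [hs, h, abs_of_neg h]
    · simp [hs, h, abs_of_nonneg (not_lt.1 h)]
  set A := {c : ℝ | ∃ x : Fin n → ℝ, pnorm p x = 1 ∧ c = r * ‖x‖ - ∑ i, x i * v i} with hA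
  set B := {c : ℝ | ∃ z : Fin n → ℝ, z ≠ 0 ∧ ‖z‖ ≤ 1 ∧
      c = (r - ∑ i, z i * |v i|) / pnorm p z} with hB
  -- membership lemma: scaling any nonzero z to the p-sphere
  have memA : ∀ z : Fin n → ℝ, z ≠ 0 →
      (r * ‖z‖ - ∑ i, z i * |v i|) / pnorm p z ∈ A := by
    intro z hz
    have hP : 0 < pnorm p z := pnorm_pos hp hz
    have habs : ∀ i, |s i * z i / pnorm p z| = (1 / pnorm p z) * |z i| := fun i => by
      rw [abs_div, abs_mul, hs_abs, one_mul, abs_of_pos hP]; ring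
    refine ⟨fun i => s i * z i / pnorm p z, ?_, ?_⟩
    · rw [pnorm_homog hp (by positivity) habs]
      field_simp
    · have hnorm : ‖fun i => s i * z i / pnorm p z‖ = (1 / pnorm p z) * ‖z‖ :=
        norm_homog (by positivity) habs
      have hsum : ∑ i, (s i * z i / pnorm p z) * v i = (∑ i, z i * |v i|) / pnorm p z := by
        rw [Finset.sum_div]
        refine Finset.sum_congr rfl fun i _ => ?_
        rw [div_mul_eq_mul_div]
        congr 1
        rw [mul_comm (s i) (z i), mul_assoc, hsv2]
      rw [hnorm, hsum]
      field_simp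
  -- A ⊆ B
  have AsubB : A ⊆ B := by
    rintro c ⟨x, hx1, rfl⟩
    have hx0 : x ≠ 0 := by
      rintro rfl
      rw [pnorm_zero hp] at hx1; norm_num at hx1
    have hxn : 0 < ‖x‖ := norm_pos_iff.2 hx0
    have habs : ∀ i, |s i * x i / ‖x‖| = (1 / ‖x‖) * |x i| := fun i => by
      rw [abs_div, abs_mul, hs_abs, one_mul, abs_of_pos hxn]; ring
    obtain ⟨j, hj⟩ := Function.ne_iff.mp hx0
    refine ⟨fun i => s i * x i / ‖x‖, ?_, ?_, ?_⟩
    · intro h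
      have := congrFun h j
      simp only [Pi.zero_apply, div_eq_zero_iff, mul_eq_zero] at this
      rcases this with (h1 | h1) | h1
      · have := hs_abs j; rw [h1] at this; norm_num at this
      · exact hj h1
      · exact hxn.ne' h1
    · rw [norm_homog (by positivity) habs]
      field_simp
      exact le_rfl
    · have hP : pnorm p (fun i => s i * x i / ‖x‖) = (1 / ‖x‖) * pnorm p x :=
        pnorm_homog hp (by positivity) habs
      have hsum : ∑ i, (s i * x i / ‖x‖) * |v i| = (∑ i, x i * v i) / ‖x‖ := by
        rw [Finset.sum_div]
        refine Finset.sum_congr rfl fun i _ => ?_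
        rw [div_mul_eq_mul_div]
        congr 1
        rw [mul_comm (s i) (x i), mul_assoc, hsv]
      rw [hP, hsum, hx1]
      field_simp
  -- bounded below
  have hBbdd : BddBelow B := by
    refine ⟨-∑ i, |v i|, ?_⟩
    rintro c ⟨z, hz0, hz1, rfl⟩
    have hP : 0 < pnorm p z := pnorm_pos hp hz0
    have hsum : ∑ i, z i * |v i| ≤ pnorm p z * ∑ i, |v i| := by
      rw [Finset.mul_sum]
      refine Finset.sum_le_sum fun i _ => ?_
      have h1 : z i ≤ pnorm p z := (le_abs_self _).trans (abs_le_pnorm hp z i)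
      exact mul_le_mul_of_nonneg_right h1 (abs_nonneg _)
    have h2 : (r - pnorm p z * ∑ i, |v i|) / pnorm p z ≤
        (r - ∑ i, z i * |v i|) / pnorm p z := by gcongr
    have h3 : (r - pnorm p z * ∑ i, |v i|) / pnorm p z = r / pnorm p z - ∑ i, |v i| := by
      field_simp
    have h4 : 0 < r / pnorm p z := by positivity
    linarith
  have hAbdd : BddBelow A := hBbdd.mono AsubB
  -- nonempty
  have hone : (fun _ : Fin n => (1:ℝ)) ≠ 0 := by
    intro h
    have := congrFun h ⟨0, hn⟩
    norm_num at this
  have hAne : A.Nonempty := ⟨_, memA _ hone⟩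
  -- compact sphere minimizer
  have hScomp : IsCompact {z : Fin n → ℝ | ‖z‖ = 1} := by
    have heq : {z : Fin n → ℝ | ‖z‖ = 1} = Metric.sphere (0 : Fin n → ℝ) 1 := by
      ext z; simp [Metric.mem_sphere, dist_zero_right]
    rw [heq]
    exact isCompact_sphere 0 1
  have hSne : {z : Fin n → ℝ | ‖z‖ = 1}.Nonempty := by
    refine ⟨fun _ => 1, ?_⟩
    simp only [Set.mem_setOf_eq]
    rw [pi_norm_const (1:ℝ)]
    norm_num
  have hcont : ContinuousOn (fun z : Fin n → ℝ => (r - ∑ i, z i * |v i|) / pnorm p z)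
      {z | ‖z‖ = 1} := by
    apply ContinuousOn.div
    · exact (continuous_const.sub (continuous_finset_sum _ fun i _ =>
        (continuous_apply i).mul continuous_const)).continuousOn
    · exact (pnorm_continuous hp).continuousOn
    · intro z hz
      have hz0 : z ≠ 0 := by
        intro h; rw [h] at hz; simp at hz
      exact (pnorm_pos hp hz0).ne'
  obtain ⟨z₀, hz₀S, hz₀min⟩ := hScomp.exists_isMinOn hSne hcont
  have hz₀n : ‖z₀‖ = 1 := hz₀S
  have hz₀0 : z₀ ≠ 0 := by
    intro h; rw [h] at hz₀n; simp at hz₀n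
  have hz₀B : (r - ∑ i, z₀ i * |v i|) / pnorm p z₀ ∈ B := ⟨z₀, hz₀0, hz₀n.le, rfl⟩
  have hBne : B.Nonempty := ⟨_, hz₀B⟩
  -- z₀ minimizes over all of B
  have key : ∀ c ∈ B, (r - ∑ i, z₀ i * |v i|) / pnorm p z₀ ≤ c := by
    rintro c ⟨z, hz0, hz1, rfl⟩
    have hzn : 0 < ‖z‖ := norm_pos_iff.2 hz0
    have hP : 0 < pnorm p z := pnorm_pos hp hz0
    have habs : ∀ i, |z i / ‖z‖| = (1 / ‖z‖) * |z i| := fun i => by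
      rw [abs_div, abs_of_pos hzn]; ring
    have hwS : (fun i => z i / ‖z‖) ∈ {z : Fin n → ℝ | ‖z‖ = 1} := by
      simp only [Set.mem_setOf_eq]
      rw [norm_homog (by positivity) habs]
      field_simp
    have h1 := isMinOn_iff.mp hz₀min _ hwS
    have hwP : pnorm p (fun i => z i / ‖z‖) = (1 / ‖z‖) * pnorm p z :=
      pnorm_homog hp (by positivity) habs
    have hwsum : ∑ i, (z i / ‖z‖) * |v i| = (∑ i, z i * |v i|) / ‖z‖ := by
      rw [Finset.sum_div]
      exact Finset.sum_congr rfl fun i _ => (div_mul_eq_mul_div _ _ _)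
    have hfw : (r - ∑ i, (z i / ‖z‖) * |v i|) / pnorm p (fun i => z i / ‖z‖) =
        (r * ‖z‖ - ∑ i, z i * |v i|) / pnorm p z := by
      rw [hwP, hwsum]
      field_simp
    have h2 : (r * ‖z‖ - ∑ i, z i * |v i|) / pnorm p z ≤
        (r - ∑ i, z i * |v i|) / pnorm p z := by
      have hnum : r * ‖z‖ ≤ r := by nlinarith
      gcongr
    rw [hfw] at h1
    linarith
  -- sInf B equals the value at z₀
  have hInfB : sInf B = (r - ∑ i, z₀ i * |v i|) / pnorm p z₀ :=
    le_antisymm (csInf_le hBbdd hz₀B) (le_csInf hBne key)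
  -- the value at z₀ is in A
  have hz₀A : (r - ∑ i, z₀ i * |v i|) / pnorm p z₀ ∈ A := by
    have := memA z₀ hz₀0
    rwa [hz₀n, mul_one] at this
  constructor
  · refine le_antisymm ?_ (csInf_le_csInf hBbdd hAne AsubB)
    rw [hInfB]
    exact csInf_le hAbdd hz₀A
  · exact ⟨z₀, hz₀n, hInfB.symm⟩
end

section
/- Let p = 1, r > 0, v ∈ ℝ^n with r < ‖v‖_1 and |v_1| ≥ ⋯ ≥ |v_n| ≥ |v_{n+1}| = 0. Define A(m) = Σ_{j=1}^m (|v_j| − |v_{m+1}|), m_1 = max{m : A(m−1) < r}, m_0 = min{m : A(m) > r}. Then z* ∈ [0,1]^n minimizes G(z) = (r − ⟨z,|v|⟩)/‖z‖_1 over the unit sup-ball if and only if z*_i = 1 for i ≤ m_1 and z*_i = 0 for i > m_0 (with z*_i ∈ [0,1] arbitrary for m_1 < i ≤ m_0). -/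
open Finset

/-!
The function `excess c t = Σᵢ (cᵢ - t)⁺` is continuous, antitone, and strictly decreasing
where positive, so there is a unique level `g > 0` with `excess |v| g = r`; the paper's `A(m)` is
`excess |v| |v_{m+1}|`, hence `m₁` counts the coordinates with `|vᵢ| > g` and `m₀` is the first
coordinate with `|vᵢ| < g`. For `y` in the unit sup-ball,
`Σ yᵢ|vᵢ| - g Σ |yᵢ| ≤ Σ |yᵢ| (|vᵢ| - g) ≤ Σ (|vᵢ| - g)⁺ = r`, so `G ≥ -g`, with equality for
`z ∈ [0,1]ⁿ` exactly when `zᵢ = 1` where `|vᵢ| > g` and `zᵢ = 0` where `|vᵢ| < g`.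
-/

variable {ι : Type*}

noncomputable def excess (s : Finset ι) (c : ι → ℝ) (t : ℝ) : ℝ :=
  ∑ i ∈ s, max (c i - t) 0

section Excess

variable (s : Finset ι) (c : ι → ℝ)

theorem excess_antitone : Antitone (excess s c) := fun _ _ htu =>
  sum_le_sum fun _ _ => max_le_max (by linarith) le_rfl

theorem excess_lt_excess {t u : ℝ} (htu : t < u) (hpos : 0 < excess s c u) :
    excess s c u < excess s c t := by
  obtain ⟨i, hi, hci⟩ : ∃ i ∈ s, (0 : ℝ) < max (c i - u) 0 :=
    exists_lt_of_sum_lt (by simpa [excess] using hpos)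
  have hiu : u < c i := by simpa using hci
  refine sum_lt_sum (fun _ _ => max_le_max (by linarith) le_rfl) ⟨i, hi, ?_⟩
  rw [max_eq_left (by linarith)]
  exact lt_max_of_lt_left (by linarith)

theorem continuous_excess : Continuous (excess s c) := by
  unfold excess
  fun_prop

theorem excess_eq_zero {t : ℝ} (ht : ∀ i ∈ s, c i ≤ t) : excess s c t = 0 :=
  sum_eq_zero fun i hi => max_eq_right (by linarith [ht i hi])

theorem exists_excess_eq {r : ℝ} (h0 : 0 ≤ r) (hr : r ≤ excess s c 0) :
    ∃ g, excess s c g = r := by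
  have htop : excess s c (∑ i ∈ s, |c i|) = 0 := excess_eq_zero s c fun i hi =>
    (le_abs_self _).trans (single_le_sum (fun j _ => abs_nonneg (c j)) hi)
  obtain ⟨g, -, hg⟩ := intermediate_value_Icc' (sum_nonneg fun i _ => abs_nonneg (c i))
    (continuous_excess s c).continuousOn ⟨htop ▸ h0, hr⟩
  exact ⟨g, hg⟩

variable {s c} {g r : ℝ}

theorem excess_lt_iff (hr : 0 < r) (hg : excess s c g = r) {t : ℝ} :
    excess s c t < r ↔ g < t := by
  constructor
  · intro h
    by_contra! htg
    linarith [excess_antitone s c htg]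
  · intro hgt
    by_cases hpos : 0 < excess s c t
    · exact hg ▸ excess_lt_excess s c hgt hpos
    · linarith

theorem lt_excess_iff (hr : 0 < r) (hg : excess s c g = r) {t : ℝ} :
    r < excess s c t ↔ t < g := by
  constructor
  · intro h
    by_contra! hgt
    linarith [excess_antitone s c hgt]
  · intro htg
    exact hg ▸ excess_lt_excess s c htg (hg ▸ hr)

end Excess

theorem mul_le_max_zero {w x : ℝ} (h0 : 0 ≤ w) (h1 : w ≤ 1) : w * x ≤ max x 0 := by
  rcases le_total x 0 with hx | hx
  · rw [max_eq_right hx]; nlinarith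
  · rw [max_eq_left hx]; nlinarith

theorem mul_eq_max_zero_iff {w x : ℝ} :
    w * x = max x 0 ↔ (0 < x → w = 1) ∧ (x < 0 → w = 0) := by
  rcases lt_trichotomy x 0 with hx | rfl | hx
  · simp [max_eq_right hx.le, hx, hx.ne, not_lt.2 hx.le]
  · simp
  · rw [max_eq_left hx.le]
    simp only [hx, true_implies, not_lt.2 hx.le, false_implies, and_true]
    exact ⟨fun h => mul_left_eq_self₀.1 h |>.resolve_right hx.ne', fun h => by rw [h, one_mul]⟩

section Objective

variable [Fintype ι] {c z : ι → ℝ} {g r : ℝ}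

noncomputable def objective (r : ℝ) (c y : ι → ℝ) : ℝ :=
  (r - ∑ i, y i * c i) / ∑ i, |y i|

theorem sum_mul_sub_le_excess (hz : ∀ i, z i ∈ Set.Icc 0 1) :
    ∑ i, z i * (c i - g) ≤ excess univ c g :=
  sum_le_sum fun i _ => mul_le_max_zero (hz i).1 (hz i).2

theorem sum_mul_sub_eq_excess_iff (hz : ∀ i, z i ∈ Set.Icc 0 1) :
    ∑ i, z i * (c i - g) = excess univ c g ↔
      (∀ i, g < c i → z i = 1) ∧ ∀ i, c i < g → z i = 0 := by
  rw [excess, sum_eq_sum_iff_of_le fun i _ => mul_le_max_zero (hz i).1 (hz i).2]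
  simp only [mem_univ, true_implies, mul_eq_max_zero_iff, sub_pos, sub_neg,
    forall_and]

theorem objective_eq_neg_iff (hr : r ≠ 0) (hg : g ≠ 0) (hz : ∀ i, 0 ≤ z i) :
    objective r c z = -g ↔ ∑ i, z i * (c i - g) = r := by
  have habs : ∑ i, |z i| = ∑ i, z i := sum_congr rfl fun i _ => abs_of_nonneg (hz i)
  by_cases h0 : ∑ i, z i = 0
  · have hz0 : ∀ i, z i = 0 := fun i =>
      (sum_eq_zero_iff_of_nonneg fun i _ => hz i).1 h0 i (mem_univ i)
    simp [objective, hz0, hr.symm, hg]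
  · rw [objective, habs, div_eq_iff h0]
    simp only [mul_sub, sum_sub_distrib, ← sum_mul]
    constructor <;> intro h <;> linarith

theorem neg_le_objective (hc : ∀ i, 0 ≤ c i) (hg : 0 ≤ g) (hexc : excess univ c g = r)
    {y : ι → ℝ} (hy : ∀ i, |y i| ≤ 1) : -g ≤ objective r c y := by
  rcases (sum_nonneg fun i _ => abs_nonneg (y i)).eq_or_lt with h | h
  · rw [objective, ← h, div_zero]
    linarith
  · rw [objective, le_div_iff₀ h]
    have habs : ∑ i, y i * c i ≤ ∑ i, |y i| * c i :=
      sum_le_sum fun i _ => mul_le_mul_of_nonneg_right (le_abs_self _) (hc i)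
    have hle := sum_mul_sub_le_excess (c := c) (g := g) fun i => ⟨abs_nonneg (y i), hy i⟩
    simp only [mul_sub, sum_sub_distrib, ← sum_mul] at hle
    linarith

theorem isMinOn_objective_iff (hc : ∀ i, 0 ≤ c i) (hg : 0 < g) (hr : 0 < r)
    (hexc : excess univ c g = r) (hz : ∀ i, z i ∈ Set.Icc 0 1) :
    IsMinOn (objective r c) (Metric.closedBall 0 1) z ↔
      (∀ i, g < c i → z i = 1) ∧ ∀ i, c i < g → z i = 0 := by
  have hball : ∀ y : ι → ℝ, y ∈ Metric.closedBall 0 1 ↔ ∀ i, |y i| ≤ 1 := fun y => by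
    simp [pi_norm_le_iff_of_nonneg, Real.norm_eq_abs]
  have hmin : ∀ y ∈ Metric.closedBall 0 1, -g ≤ objective r c y := fun y hy =>
    neg_le_objective hc hg.le hexc ((hball y).1 hy)
  rw [← sum_mul_sub_eq_excess_iff hz, hexc, ← objective_eq_neg_iff hr.ne' hg.ne' fun i => (hz i).1,
    isMinOn_iff]
  constructor
  · intro hzmin
    set w : ι → ℝ := fun i => if g < c i then 1 else 0
    have hw : ∀ i, w i ∈ Set.Icc 0 1 := fun i => by by_cases h : g < c i <;> simp [w, h]
    have hw_obj : objective r c w = -g := by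
      rw [objective_eq_neg_iff hr.ne' hg.ne' fun i => (hw i).1, ← hexc,
        sum_mul_sub_eq_excess_iff hw]
      exact ⟨fun i hi => by simp [w, hi], fun i hi => by simp [w, not_lt.2 hi.le]⟩
    have hw_mem : w ∈ Metric.closedBall 0 1 := (hball w).2 fun i => by
      rw [abs_of_nonneg (hw i).1]
      exact (hw i).2
    exact le_antisymm (hw_obj ▸ hzmin w hw_mem)
      (hmin z ((hball z).2 fun i => by rw [abs_of_nonneg (hz i).1]; exact (hz i).2))
  · intro h y hy
    exact h ▸ hmin y hy

end Objective

namespace Antitone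

variable {a : ℕ → ℝ} {n : ℕ}

theorem sum_range_sub_eq_excess (ha : Antitone a) (hzero : ∀ j, n ≤ j → a j = 0) (m : ℕ) :
    ∑ j ∈ range m, (a j - a m) = excess (range n) a (a m) := by
  have ham : 0 ≤ a m := hzero (m + n) (by omega) ▸ ha (by omega : m ≤ m + n)
  calc ∑ j ∈ range m, (a j - a m) = excess (range (m + n)) a (a m) := by
        rw [excess, ← sum_range_add_sum_Ico _ (by omega : m ≤ m + n),
          sum_eq_zero (s := Ico m (m + n)) fun j hj =>
            max_eq_right (by linarith [ha (mem_Ico.1 hj).1]), add_zero]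
        exact sum_congr rfl fun j hj =>
          (max_eq_left (by linarith [ha (mem_range.1 hj).le])).symm
    _ = excess (range n) a (a m) := by
        rw [excess, ← sum_range_add_sum_Ico _ (by omega : n ≤ m + n),
          sum_eq_zero (s := Ico n (m + n)) fun j hj =>
            max_eq_right (by linarith [hzero j (mem_Ico.1 hj).1]), add_zero]
        rfl

theorem lt_sSup_setOf_lt_iff (ha : Antitone a) (hzero : ∀ j, n ≤ j → a j = 0) {g : ℝ}
    (hg : 0 ≤ g) (hga : g < a 0) (j : ℕ) :
    j < sSup {m : ℕ | 1 ≤ m ∧ m ≤ n ∧ g < a (m - 1)} ↔ g < a j := by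
  set S := {m : ℕ | 1 ≤ m ∧ m ≤ n ∧ g < a (m - 1)}
  have hbdd : BddAbove S := ⟨n, fun m hm => hm.2.1⟩
  have hn : 1 ≤ n := by
    by_contra! h
    linarith [hzero 0 (by omega)]
  have hmem : sSup S ∈ S := Nat.sSup_mem ⟨1, le_rfl, hn, by simpa using hga⟩ hbdd
  constructor
  · intro hj
    exact hmem.2.2.trans_le (ha (by omega))
  · intro hgj
    have hjn : j < n := by
      by_contra! h
      linarith [hzero j h]
    exact le_csSup hbdd ⟨by omega, hjn, by simpa using hgj⟩

theorem sInf_setOf_lt_le_iff (ha : Antitone a) (hzero : ∀ j, n ≤ j → a j = 0) {g : ℝ}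
    (hg : 0 < g) (hga : g < a 0) (j : ℕ) :
    sInf {m : ℕ | 1 ≤ m ∧ a m < g} ≤ j ↔ a j < g := by
  have hmem := Nat.sInf_mem (s := {m : ℕ | 1 ≤ m ∧ a m < g})
    ⟨n + 1, by omega, by rw [hzero _ (by omega)]; exact hg⟩
  constructor
  · intro h
    exact (ha h).trans_lt hmem.2
  · intro h
    refine Nat.sInf_le ⟨Nat.one_le_iff_ne_zero.2 ?_, h⟩
    rintro rfl
    linarith

end Antitone

/-- Exact solution of the inner subproblem, Scenario 2 (`p = 1`, `r < ‖v‖₁`): with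
`A(m) = Σ_{j≤m}(|v_j| − |v_{m+1}|)`, `m₁ = max{m ∈ {1,…,n} : A(m−1) < r}` and
`m₀ = min{m : A(m) > r}`, a vector `z* ∈ [0,1]^n` minimizes
`G(z) = (r − ⟨z,|v|⟩)/‖z‖₁` over the unit sup-ball iff `z*_i = 1` for the first `m₁`
coordinates and `z*_i = 0` beyond the first `m₀`.  (Indices are 0-based.) -/
theorem stmt14 {n : ℕ}
    (v : Fin n → ℝ) (r : ℝ) (hr : 0 < r) (hlt : r < ∑ i, |v i|)
    (hord : ∀ i j : Fin n, i ≤ j → |v j| ≤ |v i|)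
    (a : ℕ → ℝ) (ha : ∀ j, a j = if h : j < n then |v ⟨j, h⟩| else 0)
    (A : ℕ → ℝ) (hA : ∀ m, A m = ∑ j ∈ Finset.range m, (a j - a m))
    (m₁ : ℕ) (hm₁ : m₁ = sSup {m : ℕ | 1 ≤ m ∧ m ≤ n ∧ A (m - 1) < r})
    (m₀ : ℕ) (hm₀ : m₀ = sInf {m : ℕ | 1 ≤ m ∧ r < A m})
    (zs : Fin n → ℝ) (hbox : ∀ i, zs i ∈ Set.Icc (0 : ℝ) 1) :
    (∀ y : Fin n → ℝ, ‖y‖ ≤ 1 →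
        (r - ∑ i, zs i * |v i|) / (∑ i, |zs i|) ≤ (r - ∑ i, y i * |v i|) / (∑ i, |y i|))
      ↔ ((∀ i : Fin n, (i : ℕ) < m₁ → zs i = 1) ∧
          ∀ i : Fin n, m₀ ≤ (i : ℕ) → zs i = 0) := by
  have ha_zero : ∀ j, n ≤ j → a j = 0 := fun j hj => by rw [ha, dif_neg (by omega)]
  have ha_anti : Antitone a := fun j k hjk => by
    by_cases hk : k < n
    · rw [ha, ha, dif_pos hk, dif_pos (hjk.trans_lt hk)]
      exact hord ⟨j, _⟩ ⟨k, hk⟩ hjk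
    · rw [ha_zero k (by omega), ha]
      split <;> simp
  have hva : ∀ i : Fin n, |v i| = a i := fun i => by simp [ha]
  have hexc : ∀ t, excess (range n) a t = excess univ (fun i => |v i|) t := fun t => by
    simp [excess, ← Fin.sum_univ_eq_sum_range (fun j => max (a j - t) 0), hva]
  have hA_exc : ∀ m, A m = excess univ (fun i => |v i|) (a m) := fun m => by
    rw [hA, ha_anti.sum_range_sub_eq_excess ha_zero, hexc]
  have hr_lt : r < excess univ (fun i => |v i|) 0 := by simpa [excess] using hlt
  obtain ⟨g, hg⟩ := exists_excess_eq univ _ hr.le hr_lt.le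
  have hg_pos : 0 < g := (lt_excess_iff hr hg).1 hr_lt
  have hA_lt : ∀ m, A m < r ↔ g < a m := fun m => by rw [hA_exc, excess_lt_iff hr hg]
  have hlt_A : ∀ m, r < A m ↔ a m < g := fun m => by rw [hA_exc, lt_excess_iff hr hg]
  have hga : g < a 0 := (hA_lt 0).1 (by simp [hA, hr])
  have key := isMinOn_objective_iff (fun i => abs_nonneg (v i)) hg_pos hr hg hbox
  simp only [isMinOn_iff, mem_closedBall_zero_iff, objective] at key
  rw [key]
  subst hm₁ hm₀
  simp only [hA_lt, hlt_A, ha_anti.lt_sSup_setOf_lt_iff ha_zero hg_pos.le hga,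
    ha_anti.sInf_setOf_lt_le_iff ha_zero hg_pos hga, hva]
end

section
/- Let x ∈ ℝ^n with S^<(x) = ∅ and suppose x satisfies x/‖x‖_∞ ∈ Sgn(s) for every s ∈ ∂I(x). Then for each coordinate i, F(T_i x) ≤ F(x), where T_i x flips the sign of the i-th coordinate of x; i.e., x belongs to the set C = { x : F(T_i x) ≤ F(x) for all i }. -/
open Finset

lemma neg_of_ne {M a b : ℝ} (ha : |a| = M) (hb : |b| = M) (hab : a ≠ b) : b = -a := by
  have hM : 0 ≤ M := ha ▸ abs_nonneg a
  rcases (abs_eq hM).mp ha with h1 | h1 <;> rcases (abs_eq hM).mp hb with h2 | h2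
  · exact absurd (h1.trans h2.symm) hab
  · rw [h1, h2]
  · rw [h1, h2, neg_neg]
  · exact absurd (h1.trans h2.symm) hab

lemma mem_sgn_helper {M a b v : ℝ} (hM : 0 < M) (ha : |a| = M) (hb : |b| = M)
    (hv : |v| ≤ 1) (hforced : a ≠ b → v = (a - b) / (2 * M)) : v ∈ SgnSet (a - b) := by
  by_cases hab : a = b
  · subst hab
    simp only [sub_self, SgnSet, lt_irrefl, if_neg (lt_irrefl (0:ℝ)), if_neg (by norm_num : ¬ (0:ℝ) < 0)]
    rcases abs_le.mp hv with ⟨h1, h2⟩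
    exact Set.mem_Icc.mpr ⟨h1, h2⟩
  · have hb' : b = -a := neg_of_ne ha hb hab
    have hvv := hforced hab
    rcases abs_eq hM.le |>.mp ha with h1 | h1
    · have hd : a - b = 2 * M := by rw [hb', h1]; ring
      have : v = 1 := by rw [hvv, hd]; field_simp
      simp [SgnSet, hd, hM, this]
    · have hd : a - b = -(2 * M) := by rw [hb', h1]; ring
      have : v = -1 := by rw [hvv, hd]; field_simp
      have hlt : a - b < 0 := by rw [hd]; linarith
      have hnlt : ¬ (0 < a - b) := by linarith
      simp [SgnSet, hnlt, hlt, this]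

lemma sgn_nonneg {M a t : ℝ} (hM : 0 < M) (ha : |a| = M) (h : a / M ∈ SgnSet t) :
    0 ≤ a * t := by
  unfold SgnSet at h
  rcases lt_trichotomy t 0 with h1 | h1 | h1
  · rw [if_neg (by linarith), if_pos h1] at h
    simp only [Set.mem_singleton_iff] at h
    have : a = -M := by field_simp at h; linarith
    nlinarith
  · simp [h1]
  · rw [if_pos h1] at h
    simp only [Set.mem_singleton_iff] at h
    have : a = M := by field_simp at h; linarith
    nlinarith

lemma abs_flip {M a b : ℝ} (hM : 0 < M) (ha : |a| = M) (hb : |b| = M) :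
    |(-a) - b| - |a - b| = 2 / M * (a * b) := by
  rcases abs_eq hM.le |>.mp ha with h1 | h1 <;>
    rcases abs_eq hM.le |>.mp hb with h2 | h2 <;> rw [h1, h2]
  · rw [sub_self, abs_zero, show (-M) - M = -(2 * M) by ring, abs_neg,
      abs_of_nonneg (by linarith)]
    field_simp; ring
  · rw [show (-M) - (-M) = 0 by ring, abs_zero, show M - (-M) = 2 * M by ring,
      abs_of_nonneg (by linarith)]
    field_simp; ring
  · rw [show (-(-M)) - M = 0 by ring, abs_zero, show (-M) - M = -(2 * M) by ring,
      abs_neg, abs_of_nonneg (by linarith)]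
    field_simp; ring
  · rw [show (-(-M)) - (-M) = 2 * M by ring, abs_of_nonneg (by linarith), sub_self,
      abs_zero]
    field_simp; ring

/-- If every coordinate of `x` has maximal modulus and `x/‖x‖_∞ ∈ Sgn(s)` for every
`s ∈ ∂I(x)`, then flipping any single coordinate does not increase `F`: `x ∈ C`. -/
theorem stmt19 {n : ℕ} (w : Fin n → Fin n → ℝ)
    (hsym : ∀ i j, w i j = w j i) (hnn : ∀ i j, 0 ≤ w i j)
    (x : Fin n → ℝ) (hx : x ≠ 0)
    (hfull : ∀ i, |x i| = ‖x‖)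
    (hsgn : ∀ s ∈ subgrad w x, ∀ i, x i / ‖x‖ ∈ SgnSet (s i)) :
    ∀ i : Fin n,
      Ifun w (Function.update x i (-(x i))) / ‖Function.update x i (-(x i))‖ ≤
        Ifun w x / ‖x‖ := by
  intro i
  set M := ‖x‖ with hMdef
  have hM : 0 < M := norm_pos_iff.mpr hx
  have hMne : M ≠ 0 := ne_of_gt hM
  set y := Function.update x i (-(x i)) with hy
  have hyi : y i = -(x i) := Function.update_self _ _ _
  have hyj : ∀ j, j ≠ i → y j = x j := fun j hj => Function.update_of_ne hj _ _
  -- the norm is preserved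
  have habs : ∀ j, |y j| = M := by
    intro j
    by_cases hj : j = i
    · subst hj; rw [hyi, abs_neg]; exact hfull j
    · rw [hyj j hj]; exact hfull j
  have hynorm : ‖y‖ = M := by
    apply le_antisymm
    · apply (pi_norm_le_iff_of_nonneg hM.le).mpr
      intro j; rw [Real.norm_eq_abs, habs j]
    · calc M = |y i| := (habs i).symm
        _ = ‖y i‖ := (Real.norm_eq_abs _).symm
        _ ≤ ‖y‖ := norm_le_pi_norm y i
  -- the subgradient element
  set z : Fin n → Fin n → ℝ := fun j k =>
    if j = i then (if k = i then 0 else -x k / M)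
    else if k = i then x j / M else (x j - x k) / (2 * M) with hzdef
  set s : Fin n → ℝ := fun j => ∑ k, w j k * z j k with hsdef
  have habs1 : ∀ k : Fin n, |x k / M| ≤ 1 := by
    intro k; rw [abs_div, hfull k, abs_of_nonneg hM.le, div_self hMne]
  have hs : s ∈ subgrad w x := by
    refine ⟨z, ?_, ?_, fun j => rfl⟩
    · intro j k
      by_cases hj : j = i <;> by_cases hk : k = i
      · rw [hj, hk]
        simp only [hzdef, if_pos rfl]
        exact mem_sgn_helper hM (hfull i) (hfull i) (by simp) (fun h => absurd rfl h)
      · rw [hj]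
        simp only [hzdef, if_pos rfl, if_neg hk]
        refine mem_sgn_helper hM (hfull i) (hfull k) ?_ ?_
        · rw [show -x k / M = -(x k / M) by ring, abs_neg]; exact habs1 k
        · intro hne
          have hkk := neg_of_ne (hfull i) (hfull k) hne
          rw [hkk]; field_simp; ring
      · rw [hk]
        simp only [hzdef, if_neg hj, if_pos rfl]
        refine mem_sgn_helper hM (hfull j) (hfull i) (habs1 j) ?_
        intro hne
        have hkk := neg_of_ne (hfull j) (hfull i) hne
        rw [hkk]; simp only [↓reduceIte]; field_simp; ring
      · simp only [hzdef, if_neg hj, if_neg hk]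
        refine mem_sgn_helper hM (hfull j) (hfull k) ?_ (fun _ => rfl)
        rw [abs_div, abs_of_nonneg (by linarith : (0:ℝ) ≤ 2 * M), div_le_one (by linarith)]
        calc |x j - x k| ≤ |x j| + |x k| := abs_sub _ _
          _ = 2 * M := by rw [hfull j, hfull k]; ring
    · intro a b
      by_cases ha : a = i <;> by_cases hb : b = i
      · simp [hzdef, ha, hb]
      · simp [hzdef, ha, hb, neg_div]
      · simp [hzdef, ha, hb, neg_div]
      · simp only [hzdef, if_neg ha, if_neg hb]
        ring
  have hsi := hsgn s hs i
  have hprod : 0 ≤ x i * s i := sgn_nonneg hM (hfull i) hsi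
  -- compute x i * s i
  have hA : ∑ k ∈ univ.erase i, w i k * (x i * x k) ≤ 0 := by
    have hcomp : x i * s i = -(1 / M) * ∑ k ∈ univ.erase i, w i k * (x i * x k) := by
      have h1 : s i = ∑ k ∈ univ.erase i, w i k * (-x k / M) := by
        have h2 : s i = ∑ k, w i k * (if k = i then 0 else -x k / M) := by
          simp only [hsdef, hzdef, eq_self_iff_true, if_true, ite_true]
        rw [h2, ← Finset.add_sum_erase _ _ (mem_univ i), if_pos rfl, mul_zero, zero_add]
        exact Finset.sum_congr rfl fun k hk => by rw [if_neg (Finset.ne_of_mem_erase hk)]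
      rw [h1, Finset.mul_sum, Finset.mul_sum]
      exact Finset.sum_congr rfl fun k hk => by ring
    rw [hcomp] at hprod
    by_contra h
    push_neg at h
    nlinarith [one_div_pos.mpr hM]
  -- the change in Ifun
  set D : Fin n → Fin n → ℝ := fun j k => w j k * (|y j - y k| - |x j - x k|) with hDdef
  have hD0 : ∀ j k, j ≠ i → k ≠ i → D j k = 0 := by
    intro j k hj hk
    simp only [hDdef, hyj j hj, hyj k hk, sub_self, mul_zero]
  have hDii : D i i = 0 := by simp [hDdef]
  have hDsym : ∀ j k, D j k = D k j := by
    intro j k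
    simp only [hDdef, hsym j k, abs_sub_comm (y j) (y k), abs_sub_comm (x j) (x k)]
  have hDik : ∀ k ∈ univ.erase i, D i k = w i k * (2 / M * (x i * x k)) := by
    intro k hk
    have hki : k ≠ i := Finset.ne_of_mem_erase hk
    simp only [hDdef, hyi, hyj k hki, abs_flip hM (hfull i) (hfull k)]
  have hkey : ∑ j, ∑ k, D j k = 2 * ∑ k ∈ univ.erase i, D i k := by
    have h1 : ∀ j : Fin n, ∑ k, D j k = D j i + ∑ k ∈ univ.erase i, D j k :=
      fun j => (Finset.add_sum_erase univ (D j) (mem_univ i)).symm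
    rw [Finset.sum_congr rfl (fun j _ => h1 j), Finset.sum_add_distrib]
    have h2 : ∑ j, D j i = ∑ j ∈ univ.erase i, D i j := by
      rw [← Finset.add_sum_erase univ (fun j => D j i) (mem_univ i), hDii, zero_add]
      exact Finset.sum_congr rfl fun j _ => hDsym j i
    have h3 : ∑ j, ∑ k ∈ univ.erase i, D j k = ∑ k ∈ univ.erase i, D i k := by
      rw [← Finset.add_sum_erase univ _ (mem_univ i)]
      have : ∑ j ∈ univ.erase i, ∑ k ∈ univ.erase i, D j k = 0 := by
        apply Finset.sum_eq_zero
        intro j hj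
        apply Finset.sum_eq_zero
        intro k hk
        exact hD0 j k (Finset.ne_of_mem_erase hj) (Finset.ne_of_mem_erase hk)
      rw [this, add_zero]
    rw [h2, h3]; ring
  have hIdiff : Ifun w y = Ifun w x + (1 / 2) * ∑ j, ∑ k, D j k := by
    simp only [Ifun, hDdef, mul_sub, Finset.sum_sub_distrib]
    ring
  have hIle : Ifun w y ≤ Ifun w x := by
    rw [hIdiff, hkey]
    have : ∑ k ∈ univ.erase i, D i k = 2 / M * ∑ k ∈ univ.erase i, w i k * (x i * x k) := by
      rw [Finset.mul_sum]
      apply Finset.sum_congr rfl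
      intro k hk
      rw [hDik k hk]; ring
    rw [this]
    have h6 : 2 / M * ∑ k ∈ univ.erase i, w i k * (x i * x k) ≤ 0 :=
      mul_nonpos_of_nonneg_of_nonpos (by positivity) hA
    linarith
  rw [hynorm]
  exact (div_le_div_iff_of_pos_right hM).mpr hIle
end
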